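/- arXiv:1701.05993 — 12 statements merged into one kernel-verified Lean document; each statement's English description precedes it below -/
import Mathlib

section
/- Let K be a field of characteristic zero, A a K-algebra (not necessarily unital or commutative), and D a locally finite K-derivation of A. If e is an idempotent of A lying in both the kernel of D and the image of D, then the two-sided ideal of A generated by e is contained in the image of D. -/
/-!
Since `e = e * e * e`, the ideal is additively spanned by products `u * e * v`.
Pick `c` with `D c = e` and `e * c = c * e = c` (replace any preimage `c'` of `e` by
`e * c' * e`). The elements `e_k = c ^ k * e` satisfy `D e_0 = 0` and `D e_(k+1) = (k+1) e_k`,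
so on `U ⊗ V`, with `U`, `V` the (finite-dimensional) `D`-orbit spans of `u`, `v`, the maps
`ν_k (x ⊗ y) = x * e_k * y` satisfy `D ∘ ν_0 = ν_0 ∘ Δ` and
`D ∘ ν_(k+1) = ν_(k+1) ∘ Δ + (k+1) ν_k` for the induced derivation `Δ` of `U ⊗ V`.
Induction on the nilpotency order shows `ν_0 t ∈ D(A)` for `Δ`-nilpotent `t`; on the Fitting
complement `range Δ ^ n` this is clear from `D ∘ ν_0 = ν_0 ∘ Δ`. Hence `u * e * v = ν_0 (u ⊗ v)`
lies in the image of `D`.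
-/

open TensorProduct

theorem Module.End.apply_mem_span_range_pow_apply {R M : Type*} [Semiring R] [AddCommMonoid M]
    [Module R M] (f : Module.End R M) (a : M) :
    ∀ x ∈ Submodule.span R (Set.range fun i : ℕ => (f ^ i) a),
      f x ∈ Submodule.span R (Set.range fun i : ℕ => (f ^ i) a) := by
  intro x hx
  induction hx using Submodule.span_induction with
  | mem _ h =>
    obtain ⟨i, rfl⟩ := h
    exact Submodule.subset_span ⟨i + 1, by simp [pow_succ']⟩
  | zero => simp
  | add _ _ _ _ hx hy => simpa using add_mem hx hy
  | smul r _ _ hx => simpa using Submodule.smul_mem _ r hx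

theorem Module.End.mem_span_range_pow_apply_self {R M : Type*} [Semiring R] [AddCommMonoid M]
    [Module R M] (f : Module.End R M) (a : M) :
    a ∈ Submodule.span R (Set.range fun i : ℕ => (f ^ i) a) :=
  Submodule.subset_span ⟨0, by simp⟩

theorem mem_range_of_intertwines_of_forall_pow_apply_eq_zero {R M A : Type*} [Ring R]
    [AddCommGroup M] [Module R M] [IsArtinian R M] [AddCommGroup A] [Module R A]
    {D : A →ₗ[R] A} {Δ : Module.End R M} (ν : M →ₗ[R] A) (hν : ∀ t, D (ν t) = ν (Δ t))
    (hnil : ∀ t r, (Δ ^ r) t = 0 → ν t ∈ LinearMap.range D) (t : M) :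
    ν t ∈ LinearMap.range D := by
  obtain ⟨n, hcod, hn⟩ :=
    (Δ.eventually_codisjoint_ker_pow_range_pow.and (Filter.eventually_ge_atTop 1)).exists
  obtain ⟨a, ha, b, ⟨s, rfl⟩, rfl⟩ :=
    Submodule.mem_sup.mp (hcod.eq_top ▸ Submodule.mem_top (x := t))
  obtain ⟨m, rfl⟩ := Nat.exists_eq_add_of_le' hn
  rw [map_add, pow_succ', Module.End.mul_apply, ← hν]
  exact add_mem (hnil a _ ha) (LinearMap.mem_range_self D _)

theorem mem_range_of_pow_apply_eq_zero {K M A : Type*} [DivisionRing K] [CharZero K]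
    [AddCommGroup M] [Module K M] [AddCommGroup A] [Module K A] {D : A →ₗ[K] A}
    {Δ : Module.End K M} (ν : ℕ → M →ₗ[K] A)
    (hν : ∀ k t, D (ν (k + 1) t) = ν (k + 1) (Δ t) + ((k : K) + 1) • ν k t) (r : ℕ) :
    ∀ t, (Δ ^ r) t = 0 → ∀ k, ν k t ∈ LinearMap.range D := by
  induction r with
  | zero =>
    intro t ht k
    rw [pow_zero, Module.End.one_apply] at ht
    simp [ht]
  | succ r ih =>
    intro t ht k
    have hΔt : (Δ ^ r) (Δ t) = 0 := by rwa [← Module.End.mul_apply, ← pow_succ]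
    have hsmul : ((k : K) + 1) • ν k t ∈ LinearMap.range D := by
      rw [eq_sub_of_add_eq' (hν k t).symm]
      exact sub_mem (LinearMap.mem_range_self D _) (ih _ hΔt (k + 1))
    simpa [Nat.cast_add_one_ne_zero k] using Submodule.smul_mem _ ((k : K) + 1)⁻¹ hsmul

section Derivation

variable {K A : Type*} [CommRing K] [NonUnitalRing A] [Module K A] {D : A →ₗ[K] A}

theorem exists_mul_eq_self_and_apply_eq (hder : ∀ a b, D (a * b) = D a * b + a * D b) {e : A}
    (hidem : e * e = e) (hker : D e = 0) (him : e ∈ LinearMap.range D) :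
    ∃ c, e * c = c ∧ c * e = c ∧ D c = e := by
  obtain ⟨c, hc⟩ := him
  refine ⟨e * c * e, by rw [← mul_assoc, ← mul_assoc, hidem], by rw [mul_assoc _ e, hidem], ?_⟩
  simp only [hder, hker, hc, hidem, zero_mul, mul_zero, add_zero, zero_add]

variable [SMulCommClass K A A]

theorem apply_iterate_mul_left_succ (hder : ∀ a b, D (a * b) = D a * b + a * D b) {e c : A}
    (hidem : e * e = e) (hec : e * c = c) (hce : c * e = c) (hDc : D c = e) (n : ℕ) :
    D ((c * ·)^[n + 1] e) = ((n : K) + 1) • (c * ·)^[n] e := by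
  have he : ∀ n, e * (c * ·)^[n] e = (c * ·)^[n] e := by
    intro n
    induction n with
    | zero => exact hidem
    | succ n _ => rw [Function.iterate_succ_apply', ← mul_assoc, hec]
  induction n with
  | zero => simp [hce, hDc]
  | succ n ih =>
    rw [Function.iterate_succ_apply', hder, hDc, he, ih, mul_smul_comm,
      ← Function.iterate_succ_apply' (c * ·)]
    push_cast
    module

variable [IsScalarTower K A A]

variable (K) in
noncomputable def sandwich (w : A) (U V : Submodule K A) : U ⊗[K] V →ₗ[K] A :=
  lift <| (LinearMap.mul K A).compl₁₂ U.subtype ((LinearMap.mulLeft K w).comp V.subtype)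

@[simp]
theorem sandwich_tmul (w : A) (U V : Submodule K A) (x : U) (y : V) :
    sandwich K w U V (x ⊗ₜ y) = x * (w * y) := rfl

@[simp]
theorem sandwich_zero (U V : Submodule K A) : sandwich K 0 U V = 0 := by
  ext
  simp

theorem sandwich_smul (a : K) (w : A) (U V : Submodule K A) :
    sandwich K (a • w) U V = a • sandwich K w U V := by
  ext x y
  simp [smul_mul_assoc, mul_smul_comm]

theorem apply_sandwich (hder : ∀ a b, D (a * b) = D a * b + a * D b) (w : A)
    {U V : Submodule K A} (hU : ∀ x ∈ U, D x ∈ U) (hV : ∀ y ∈ V, D y ∈ V) (t : U ⊗[K] V) :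
    D (sandwich K w U V t) =
      sandwich K w U V ((D.restrict hU).rTensor V t + (D.restrict hV).lTensor U t) +
        sandwich K (D w) U V t := by
  induction t using TensorProduct.induction_on with
  | zero => simp
  | tmul x y =>
    simp only [LinearMap.rTensor_tmul, LinearMap.lTensor_tmul, map_add, sandwich_tmul,
      LinearMap.coe_restrict_apply, hder, mul_add]
    abel
  | add s t hs ht =>
    simp only [map_add, hs, ht]
    abel

end Derivation

theorem mul_mul_mem_range_of_isIdempotentElem {K A : Type*} [Field K] [CharZero K]
    [NonUnitalRing A] [Module K A] [SMulCommClass K A A] [IsScalarTower K A A] {D : A →ₗ[K] A}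
    (hder : ∀ a b, D (a * b) = D a * b + a * D b)
    (hLF : ∀ a : A, FiniteDimensional K (Submodule.span K (Set.range fun i : ℕ => (D ^ i) a)))
    {e : A} (hidem : e * e = e) (hker : D e = 0) (him : e ∈ LinearMap.range D) (u v : A) :
    u * (e * v) ∈ LinearMap.range D := by
  obtain ⟨c, hec, hce, hDc⟩ := exists_mul_eq_self_and_apply_eq hder hidem hker him
  have := hLF u
  have := hLF v
  have hU := Module.End.apply_mem_span_range_pow_apply D u
  have hV := Module.End.apply_mem_span_range_pow_apply D v
  set U := Submodule.span K (Set.range fun i : ℕ => (D ^ i) u)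
  set V := Submodule.span K (Set.range fun i : ℕ => (D ^ i) v)
  let Δ : Module.End K (U ⊗[K] V) := (D.restrict hU).rTensor V + (D.restrict hV).lTensor U
  let ν (k : ℕ) : U ⊗[K] V →ₗ[K] A := sandwich K ((c * ·)^[k] e) U V
  have hν₀ (t) : D (ν 0 t) = ν 0 (Δ t) := by
    simp [ν, Δ, apply_sandwich hder _ hU hV, hker]
  have hν (k t) : D (ν (k + 1) t) = ν (k + 1) (Δ t) + ((k : K) + 1) • ν k t := by
    simp only [ν, Δ, apply_sandwich hder _ hU hV, apply_iterate_mul_left_succ hder hidem hec hce hDc,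
      sandwich_smul, LinearMap.add_apply, LinearMap.smul_apply]
  simpa [ν] using mem_range_of_intertwines_of_forall_pow_apply_eq_zero (ν 0) hν₀
    (fun t r ht => mem_range_of_pow_apply_eq_zero ν hν r t ht 0)
    (⟨u, Module.End.mem_span_range_pow_apply_self D u⟩ ⊗ₜ
      ⟨v, Module.End.mem_span_range_pow_apply_self D v⟩)

/-- Let `K` be a field of characteristic zero, `A` a `K`-algebra (not
necessarily unital or commutative), and `D` a locally finite `K`-derivation of `A`.
If `e` is an idempotent of `A` lying in both the kernel and the image of `D`, then the
two-sided ideal of `A` generated by `e` is contained in the image of `D`. -/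
theorem image_of_locally_finite_derivation_contains_ideal_of_idempotent
    {K : Type*} [Field K] [CharZero K]
    {A : Type*} [NonUnitalRing A] [Module K A] [SMulCommClass K A A] [IsScalarTower K A A]
    (D : A →ₗ[K] A)
    (hder : ∀ a b : A, D (a * b) = D a * b + a * D b)
    (hLF : ∀ a : A,
      FiniteDimensional K (Submodule.span K (Set.range fun i : ℕ => (D ^ i) a)))
    (e : A) (hidem : e * e = e) (hker : D e = 0) (him : e ∈ LinearMap.range D) :
    ∀ x ∈ TwoSidedIdeal.span {e}, x ∈ LinearMap.range D := by
  have key := mul_mul_mem_range_of_isIdempotentElem hder hLF hidem hker him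
  intro x hx
  rw [TwoSidedIdeal.mem_span_iff_mem_addSubgroup_closure_nonunital] at hx
  refine (AddSubgroup.closure_le (LinearMap.range D).toAddSubgroup).mpr ?_ hx
  rintro _ (((h | ⟨_, h, b, -, rfl⟩) | ⟨a, -, _, h, rfl⟩) | ⟨_, ⟨a, -, _, h, rfl⟩, b, -, rfl⟩) <;>
    rw [Set.mem_singleton_iff.mp h]
  · simpa [hidem] using key e e
  · simpa [← mul_assoc, hidem] using key e b
  · simpa [hidem] using key a e
  · simpa [← mul_assoc] using key a b
end

section
/- Let K be a field of characteristic zero, A a K-algebra (not necessarily unital or commutative), and δ a locally nilpotent K-E-derivation of A. If e is an idempotent of A lying in both the kernel of δ and the image of δ, then the two-sided ideal of A generated by e is contained in the image of δ. -/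
/-- Let `K` be a field of characteristic zero, `A` a `K`-algebra (not
necessarily unital or commutative), and `δ` a locally nilpotent `K`-`E`-derivation of `A`.
If `e` is an idempotent of `A` lying in both the kernel and the image of `δ`, then the
two-sided ideal of `A` generated by `e` is contained in the image of `δ`. -/
theorem image_of_locally_nilpotent_Ederivation_contains_ideal_of_idempotent
    {K : Type*} [Field K] [CharZero K]
    {A : Type*} [NonUnitalRing A] [Module K A] [SMulCommClass K A A] [IsScalarTower K A A]
    (δ : A →ₗ[K] A)
    (hEder : ∃ φ : A →ₙₐ[K] A, ∀ a : A, δ a = a - φ a)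
    (hLN : ∀ a : A, ∃ m : ℕ, 1 ≤ m ∧ (δ ^ m) a = 0)
    (e : A) (hidem : e * e = e) (hker : δ e = 0) (him : e ∈ LinearMap.range δ) :
    ∀ x ∈ TwoSidedIdeal.span {e}, x ∈ LinearMap.range δ := by
  obtain ⟨φ, hφ⟩ := hEder
  have hφ' : ∀ a : A, φ a = a - δ a := by
    intro a; rw [hφ a]; abel
  have hφe : φ e = e := by rw [hφ' e, hker, sub_zero]
  obtain ⟨b₀, hb₀⟩ := him
  set b : A := e * b₀ * e with hbdef
  have hφb₀ : φ b₀ = b₀ - e := by rw [hφ' b₀, hb₀]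
  have hsub : e * (b₀ - e) * e = e * b₀ * e - e := by
    rw [mul_sub, sub_mul, hidem, hidem]
  have hδb : δ b = e := by
    rw [hφ b, hbdef, map_mul, map_mul, hφe, hφb₀, hsub]
    abel
  have hbe : b * e = b := by rw [hbdef, mul_assoc, hidem]
  have heb : e * b = b := by rw [hbdef, ← mul_assoc, ← mul_assoc, hidem]
  have hφb : φ b = b - e := by rw [hφ' b, hδb]
  -- the "falling factorial" sequence g k = b(b-e)(b-2e)⋯(b-(k-1)e)/k!
  set g : ℕ → A := fun n =>
    Nat.rec e (fun k gk => (((k : K) + 1)⁻¹ • (gk * (b - (k : K) • e)))) n with hgdef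
  have hg0 : g 0 = e := rfl
  have hgs : ∀ k, g (k + 1) = ((k : K) + 1)⁻¹ • (g k * (b - (k : K) • e)) := fun k => rfl
  have hcast : ∀ k : ℕ, ((k : K) + 1) ≠ 0 := fun k => Nat.cast_add_one_ne_zero k
  have hge : ∀ k, g k * e = g k := by
    intro k
    induction k with
    | zero => exact hidem
    | succ k ih =>
      rw [hgs k, smul_mul_assoc, mul_assoc, sub_mul, smul_mul_assoc, hbe, hidem]
  have hφge : ∀ k, φ (g k) * e = φ (g k) := by
    intro k
    rw [← hφe, ← map_mul, hge]
  have hgs' : ∀ k : ℕ, ((k : K) + 1) • g (k + 1) = g k * b - (k : K) • g k := by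
    intro k
    rw [hgs k, smul_smul, mul_inv_cancel₀ (hcast k), one_smul, mul_sub, mul_smul_comm, hge]
  have hg1 : g 1 = b := by
    have h := hgs 0
    rw [hg0] at h
    simpa [heb] using h
  -- key recursive identities:  δ(g (k+1)) = φ(g k)  and  δ(g k) * b = k • g k
  have key : ∀ k, δ (g (k + 1)) = φ (g k) ∧ δ (g k) * b = (k : K) • g k := by
    intro k
    induction k with
    | zero =>
      refine ⟨?_, ?_⟩
      · show δ (g 1) = φ (g 0)
        rw [hg1, hδb, hg0, hφe]
      · rw [hg0, hker, zero_mul, Nat.cast_zero, zero_smul]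
    | succ k ih =>
      obtain ⟨Ek, Ik⟩ := ih
      have Ik1 : δ (g (k + 1)) * b = ((k : K) + 1) • g (k + 1) := by
        rw [Ek, hφ' (g k), sub_mul, Ik, hgs' k]
      have hφgb : φ (g (k + 1)) * b = g (k + 1) * b - ((k : K) + 1) • g (k + 1) := by
        rw [hφ' (g (k + 1)), sub_mul, Ik1]
      refine ⟨?_, by push_cast; exact Ik1⟩
      have hc2 : ((k : K) + 2) ≠ 0 := by
        intro h
        apply hcast (k + 1)
        push_cast
        linear_combination h
      have hgs2 : ((k : K) + 2) • g (k + 2) = g (k + 1) * b - ((k : K) + 1) • g (k + 1) := by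
        have h := hgs' (k + 1)
        push_cast at h
        rw [show (k : K) + 2 = (k : K) + 1 + 1 by ring]
        exact h
      have hδgb : δ (g (k + 1) * b) = ((k : K) + 1) • g (k + 1) + φ (g (k + 1)) := by
        rw [hφ (g (k + 1) * b), map_mul, hφb, mul_sub, hφge (k + 1), hφgb]
        abel
      have hmain : ((k : K) + 2) • δ (g (k + 2)) = ((k : K) + 2) • φ (g (k + 1)) := by
        rw [← map_smul, hgs2, map_sub, map_smul, hδgb, hφ' (g (k + 1))]
        module
      calc δ (g (k + 1 + 1)) = ((k : K) + 2)⁻¹ • (((k : K) + 2) • δ (g (k + 2))) :=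
            (inv_smul_smul₀ hc2 _).symm
        _ = ((k : K) + 2)⁻¹ • (((k : K) + 2) • φ (g (k + 1))) := by rw [hmain]
        _ = φ (g (k + 1)) := inv_smul_smul₀ hc2 _
  -- the fundamental product identity
  have keystep : ∀ u P v : A, u * δ P * v =
      δ (u * P * v) - u * φ P * δ v - δ u * φ P * v + δ u * φ P * δ v := by
    intro u P v
    have h1 : δ (u * P * v) = u * P * v - (u - δ u) * φ P * (v - δ v) := by
      rw [hφ (u * P * v), map_mul, map_mul, hφ' u, hφ' v]
    rw [h1, hφ P]
    noncomm_ring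
  -- main lemma: x * e * z ∈ range δ for all x, z
  have main : ∀ x z : A, x * e * z ∈ LinearMap.range δ := by
    intro x z
    obtain ⟨N, -, hN⟩ := hLN x
    obtain ⟨M, -, hM⟩ := hLN z
    have hNx : ∀ j, N ≤ j → (δ ^ j) x = 0 := by
      intro j hj
      rw [show j = (j - N) + N by omega, pow_add, Module.End.mul_apply, hN, map_zero]
    have hMz : ∀ k, M ≤ k → (δ ^ k) z = 0 := by
      intro k hk
      rw [show k = (k - M) + M by omega, pow_add, Module.End.mul_apply, hM, map_zero]
    have hpowx : ∀ j : ℕ, δ ((δ ^ j) x) = (δ ^ (j + 1)) x := by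
      intro j; rw [pow_succ', Module.End.mul_apply]
    have hpowz : ∀ k : ℕ, δ ((δ ^ k) z) = (δ ^ (k + 1)) z := by
      intro k; rw [pow_succ', Module.End.mul_apply]
    have C : ∀ m, ∀ n j k : ℕ, N + M ≤ j + k + m →
        (δ ^ j) x * δ (g (n + 1)) * (δ ^ k) z ∈ LinearMap.range δ := by
      intro m
      induction m with
      | zero =>
        intro n j k h
        rcases (show N ≤ j ∨ M ≤ k by omega) with h' | h'
        · rw [hNx j h', zero_mul, zero_mul]; exact zero_mem _
        · rw [hMz k h', mul_zero]; exact zero_mem _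
      | succ m ih =>
        intro n j k h
        have hφg : φ (g (n + 1)) = δ (g (n + 1 + 1)) := ((key (n + 1)).1).symm
        have hstep := keystep ((δ ^ j) x) (g (n + 1)) ((δ ^ k) z)
        rw [hφg, hpowx j, hpowz k] at hstep
        rw [hstep]
        exact add_mem (sub_mem (sub_mem (LinearMap.mem_range_self δ _)
          (ih (n + 1) j (k + 1) (by omega))) (ih (n + 1) (j + 1) k (by omega)))
          (ih (n + 1) (j + 1) (k + 1) (by omega))
    have hδg1 : δ (g (0 + 1)) = e := by rw [(key 0).1, hg0, hφe]
    have h := C (N + M) 0 0 0 (by omega)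
    rw [hδg1] at h
    simpa using h
  -- assemble the two-sided ideal
  set S : Set A := {a : A | a ∈ LinearMap.range δ ∧ (∀ x : A, x * a ∈ LinearMap.range δ) ∧
      (∀ y : A, a * y ∈ LinearMap.range δ) ∧ ∀ x y : A, x * a * y ∈ LinearMap.range δ}
    with hSdef
  have hS0 : (0 : A) ∈ S := by
    refine ⟨zero_mem _, fun x => ?_, fun y => ?_, fun x y => ?_⟩
    · rw [mul_zero]; exact zero_mem _
    · rw [zero_mul]; exact zero_mem _
    · rw [mul_zero, zero_mul]; exact zero_mem _
  have hSadd : ∀ {u v : A}, u ∈ S → v ∈ S → u + v ∈ S := by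
    intro u v hu hv
    refine ⟨add_mem hu.1 hv.1, fun x => ?_, fun y => ?_, fun x y => ?_⟩
    · rw [mul_add]; exact add_mem (hu.2.1 x) (hv.2.1 x)
    · rw [add_mul]; exact add_mem (hu.2.2.1 y) (hv.2.2.1 y)
    · rw [mul_add, add_mul]; exact add_mem (hu.2.2.2 x y) (hv.2.2.2 x y)
  have hSneg : ∀ {u : A}, u ∈ S → -u ∈ S := by
    intro u hu
    refine ⟨neg_mem hu.1, fun x => ?_, fun y => ?_, fun x y => ?_⟩
    · rw [mul_neg]; exact neg_mem (hu.2.1 x)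
    · rw [neg_mul]; exact neg_mem (hu.2.2.1 y)
    · rw [mul_neg, neg_mul]; exact neg_mem (hu.2.2.2 x y)
  have hSml : ∀ {x u : A}, u ∈ S → x * u ∈ S := by
    intro x u hu
    refine ⟨hu.2.1 x, fun x' => ?_, fun y' => ?_, fun x' y' => ?_⟩
    · rw [← mul_assoc]; exact hu.2.1 (x' * x)
    · exact hu.2.2.2 x y'
    · rw [← mul_assoc]; exact hu.2.2.2 (x' * x) y'
  have hSmr : ∀ {u y : A}, u ∈ S → u * y ∈ S := by
    intro u y hu
    refine ⟨hu.2.2.1 y, fun x' => ?_, fun y' => ?_, fun x' y' => ?_⟩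
    · rw [← mul_assoc]; exact hu.2.2.2 x' y
    · rw [mul_assoc]; exact hu.2.2.1 (y * y')
    · rw [← mul_assoc, mul_assoc]
      exact hu.2.2.2 x' (y * y')
  have heS : e ∈ S := by
    refine ⟨⟨b₀, hb₀⟩, fun x => ?_, fun y => ?_, fun x y => main x y⟩
    · rw [show x * e = x * e * e by rw [mul_assoc, hidem]]
      exact main x e
    · rw [show e * y = e * e * y by rw [hidem]]
      exact main e y
  intro a ha
  rw [TwoSidedIdeal.mem_span_iff] at ha
  have haI := ha (TwoSidedIdeal.mk' S hS0 hSadd hSneg hSml hSmr) (by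
    intro t ht
    rw [Set.mem_singleton_iff] at ht
    subst ht
    rw [SetLike.mem_coe, TwoSidedIdeal.mem_mk']
    exact heS)
  rw [TwoSidedIdeal.mem_mk'] at haI
  exact haI.1
end

section
/- Let K be a field of characteristic zero, A a commutative K-algebra, and D a locally finite K-derivation of A. If e is an idempotent of A lying in the image of D, then the ideal of A generated by e is contained in the image of D. -/
/-!
An idempotent `e = e * e` is killed by any derivation, since `D e = 2 e D e` forces `e D e = 0`.
Hence the condition `y * e = y`, satisfied by every element of the ideal generated by `e`, is
preserved by `D`. Let `D b = e`. If moreover `D^(n+1) y = 0`, then Leibniz' rule gives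
`D^(n+1) (b y) = b D^(n+1) y + (n+1) D^n y = (n+1) D^n y`, so `y - D (b y) / (n+1)` is killed by
`D^n`; by induction every such `D`-nilpotent `y` lies in the image of `D`. Local finiteness
reduces the general case to this one: the Fitting decomposition of `D` on the finite-dimensional
span of the orbit of `x` writes `x` as a `D`-nilpotent element of that span plus an element of the
image of `D`.
-/

theorem Submodule.span_range_pow_apply_le {K M : Type*} [Semiring K] [AddCommMonoid M]
    [Module K M] {f : M →ₗ[K] M} {S : Submodule K M} (hS : ∀ y ∈ S, f y ∈ S) {x : M}
    (hx : x ∈ S) : span K (Set.range fun i : ℕ => (f ^ i) x) ≤ S :=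
  span_le.2 <| Set.range_subset_iff.2 fun i => Module.End.pow_apply_mem_of_forall_mem i hS x hx

open Submodule in
theorem exists_mem_span_range_pow_apply_eq_zero_sub_mem_range {K M : Type*} [DivisionRing K]
    [AddCommGroup M] [Module K M] {f : M →ₗ[K] M} {x : M}
    (hfin : FiniteDimensional K (span K (Set.range fun i : ℕ => (f ^ i) x))) :
    ∃ u ∈ span K (Set.range fun i : ℕ => (f ^ i) x), ∃ n, (f ^ n) u = 0 ∧
      x - u ∈ LinearMap.range f := by
  set V := span K (Set.range fun i : ℕ => (f ^ i) x)
  have hV : ∀ y ∈ V, f y ∈ V := fun y hy => by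
    refine (span_le (p := V.comap f)).2 (Set.range_subset_iff.2 fun i => ?_) hy
    exact subset_span ⟨i + 1, by simp only [pow_succ', Module.End.mul_apply]⟩
  have hxV : x ∈ V := subset_span ⟨0, by simp⟩
  obtain ⟨N, hN⟩ :=
    Filter.eventually_atTop.1 (f.restrict hV).eventually_isCompl_ker_pow_range_pow
  have hfitting := (hN (N + 1) N.le_succ).codisjoint.eq_top
  obtain ⟨u, hu, _, ⟨w, rfl⟩, hx⟩ :=
    mem_sup.1 (hfitting ▸ mem_top : (⟨x, hxV⟩ : V) ∈ _ ⊔ _)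
  rw [Module.End.pow_restrict] at hu hx
  refine ⟨u, u.2, N + 1, by simpa using congrArg Subtype.val hu, (f ^ N) w, ?_⟩
  rw [← Module.End.mul_apply, ← pow_succ']
  exact eq_sub_of_add_eq' (congrArg Subtype.val hx)

theorem TwoSidedIdeal.mul_eq_self_of_mem_span_singleton {A : Type*} [NonUnitalCommRing A]
    {e x : A} (he : e * e = e) (hx : x ∈ TwoSidedIdeal.span {e}) : x * e = x := by
  induction hx using TwoSidedIdeal.span_induction with
  | mem y hy => rwa [Set.mem_singleton_iff.1 hy]
  | zero => exact zero_mul e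
  | add y z _ _ hy hz => rw [add_mul, hy, hz]
  | neg y _ hy => rw [neg_mul, hy]
  | left_absorb a y _ hy => rw [mul_assoc, hy]
  | right_absorb a y _ hy => rw [mul_right_comm, hy]

section Derivation

variable {R A : Type*} [Semiring R] [NonUnitalCommRing A] [Module R A] {D : A →ₗ[R] A} {e : A}

theorem map_eq_zero_of_mul_self_eq (hder : ∀ a b : A, D (a * b) = D a * b + a * D b)
    (he : e * e = e) : D e = 0 := by
  have hDe : D e = e * D e + e * D e := by
    calc D e = D (e * e) := by rw [he]
      _ = e * D e + e * D e := by rw [hder, mul_comm]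
  have he_mul : e * D e = 0 := by
    have h := congrArg (e * ·) hDe
    simp only [mul_add, ← mul_assoc, he] at h
    exact left_eq_add.1 h
  rw [hDe, he_mul, add_zero]

theorem map_mul_eq_self_of_mul_eq_self (hder : ∀ a b : A, D (a * b) = D a * b + a * D b)
    (hDe : D e = 0) {y : A} (hy : y * e = y) : D y * e = D y := by
  have h := hder y e
  rw [hy, hDe, mul_zero, add_zero] at h
  exact h.symm

theorem pow_apply_mul_eq_self_of_mul_eq_self (hder : ∀ a b : A, D (a * b) = D a * b + a * D b)
    (hDe : D e = 0) {y : A} (hy : y * e = y) (n : ℕ) : (D ^ n) y * e = (D ^ n) y := by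
  induction n with
  | zero => exact hy
  | succ n ih =>
    rw [pow_succ', Module.End.mul_apply]
    exact map_mul_eq_self_of_mul_eq_self hder hDe ih

theorem pow_succ_apply_mul_of_map_eq (hder : ∀ a b : A, D (a * b) = D a * b + a * D b)
    (hDe : D e = 0) {b y : A} (hb : D b = e) (hy : y * e = y) (n : ℕ) :
    (D ^ (n + 1)) (b * y) = b * (D ^ (n + 1)) y + (n + 1) • (D ^ n) y := by
  induction n with
  | zero => simp [hder, hb, mul_comm e y, hy, add_comm]
  | succ n ih =>
    have hn := pow_apply_mul_eq_self_of_mul_eq_self hder hDe hy (n + 1)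
    simp only [pow_succ', Module.End.mul_apply] at ih hn ⊢
    rw [ih, map_add, map_nsmul, hder, hb, mul_comm e, hn]
    module

end Derivation

theorem mem_range_of_pow_apply_eq_zero_s3 {K A : Type*} [DivisionRing K] [CharZero K]
    [NonUnitalCommRing A] [Module K A] [IsScalarTower K A A] {D : A →ₗ[K] A}
    (hder : ∀ a b : A, D (a * b) = D a * b + a * D b) {e b : A} (hDe : D e = 0) (hb : D b = e)
    (n : ℕ) {y : A} (hy : y * e = y) (hyn : (D ^ n) y = 0) : y ∈ LinearMap.range D := by
  induction n generalizing y with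
  | zero => simp_all
  | succ n ih =>
    set r : K := ((n + 1 : ℕ) : K)⁻¹
    have hr : r * (n + 1 : ℕ) = 1 := inv_mul_cancel₀ (Nat.cast_ne_zero.2 n.succ_ne_zero)
    set z := y - r • D (b * y)
    have hbye : b * y * e = b * y := by rw [mul_assoc, hy]
    have hz : z * e = z := by
      rw [sub_mul, smul_mul_assoc, hy, map_mul_eq_self_of_mul_eq_self hder hDe hbye]
    have hzn : (D ^ n) z = 0 := by
      rw [map_sub, map_smul, ← Module.End.mul_apply, ← pow_succ,
        pow_succ_apply_mul_of_map_eq hder hDe hb hy, hyn, mul_zero, zero_add,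
        ← Nat.cast_smul_eq_nsmul K, smul_smul, hr, one_smul, sub_self]
    have hy_eq : y = z + r • D (b * y) := (sub_add_cancel y _).symm
    rw [hy_eq]
    exact add_mem (ih hz hzn) (Submodule.smul_mem _ r ⟨b * y, rfl⟩)

theorem image_of_locally_finite_derivation_contains_ideal_of_idempotent_comm_general
    {K : Type*} [Field K] [CharZero K]
    {A : Type*} [NonUnitalCommRing A] [Module K A] [IsScalarTower K A A]
    (D : A →ₗ[K] A)
    (hder : ∀ a b : A, D (a * b) = D a * b + a * D b)
    (hLF : ∀ a : A,
      FiniteDimensional K (Submodule.span K (Set.range fun i : ℕ => (D ^ i) a)))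
    (e : A) (hidem : e * e = e) (him : e ∈ LinearMap.range D) :
    ∀ x ∈ TwoSidedIdeal.span {e}, x ∈ LinearMap.range D := by
  obtain ⟨b, hb⟩ := him
  have hDe := map_eq_zero_of_mul_self_eq hder hidem
  intro x hx
  obtain ⟨u, hu, n, hun, hxu⟩ := exists_mem_span_range_pow_apply_eq_zero_sub_mem_range (hLF x)
  have hue : u * e = u :=
    Submodule.span_range_pow_apply_le (S := LinearMap.eqLocus (LinearMap.mulRight K e) LinearMap.id)
      (fun y hy => map_mul_eq_self_of_mul_eq_self hder hDe hy)
      (TwoSidedIdeal.mul_eq_self_of_mem_span_singleton hidem hx) hu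
  simpa using add_mem hxu (mem_range_of_pow_apply_eq_zero_s3 hder hDe hb n hue hun)

/-- Let `K` be a field of characteristic zero, `A` a commutative
`K`-algebra, and `D` a locally finite `K`-derivation of `A`.  If `e` is an idempotent of
`A` lying in the image of `D`, then the ideal of `A` generated by `e` is contained in the
image of `D`. -/
theorem image_of_locally_finite_derivation_contains_ideal_of_idempotent_comm
    {K : Type*} [Field K] [CharZero K]
    {A : Type*} [NonUnitalCommRing A] [Module K A] [SMulCommClass K A A] [IsScalarTower K A A]
    (D : A →ₗ[K] A)
    (hder : ∀ a b : A, D (a * b) = D a * b + a * D b)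
    (hLF : ∀ a : A,
      FiniteDimensional K (Submodule.span K (Set.range fun i : ℕ => (D ^ i) a)))
    (e : A) (hidem : e * e = e) (him : e ∈ LinearMap.range D) :
    ∀ x ∈ TwoSidedIdeal.span {e}, x ∈ LinearMap.range D :=
  image_of_locally_finite_derivation_contains_ideal_of_idempotent_comm_general D hder hLF e hidem
    him
end

section
/- Let K be a field of characteristic zero, A a commutative K-algebra, and δ a locally nilpotent K-E-derivation of A. If e is an idempotent of A lying in the image of δ, then the ideal of A generated by e is contained in the image of δ. -/
/-!
Write `φ = 1 - δ`. Since `δ` is locally nilpotent, `k ↦ φ^k e` is a polynomial function of `k`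
(binomial expansion of `(1 - δ)^k`); its values are idempotents, so in characteristic zero this
polynomial is itself idempotent, hence has zero derivative and is constant. Thus `φ e = e`.

Then `e A` is a unital ring with unit `e`, stable under `δ`, and `c = e b` (where `δ b = e`)
satisfies `φ c = c - e`: `φ` acts on `c` as the shift `c ↦ c - 1`. By Pascal's rule the binomial
coefficients `C(c, j)` of the ring `e A` satisfy `δ C(c, j + 1) = φ C(c, j)`, so for `w ∈ e A` the
sum `∑ₖ (-1)^k C(c, k + 1) δ^k w` telescopes to a preimage of `w`.
-/

open Polynomial Finset

theorem Derivation.map_eq_zero_of_isIdempotentElem {R A M : Type*} [CommSemiring R] [CommRing A]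
    [Algebra R A] [AddCommGroup M] [Module A M] [Module R M] (D : Derivation R A M) {e : A}
    (he : IsIdempotentElem e) : D e = 0 := by
  have h : D e = e • D e + e • D e := by
    conv_lhs => rw [← he.eq, D.leibniz]
  have h' : e • D e = 0 := by
    have : e • D e = e • D e + e • D e := by
      conv_lhs => rw [h, smul_add, smul_smul, he.eq]
    simpa using this
  rw [h, h', add_zero]

theorem Polynomial.eq_C_of_isIdempotentElem {B : Type*} [CommRing B] [IsAddTorsionFree B]
    {P : B[X]} (hP : IsIdempotentElem P) : P = C (P.coeff 0) :=
  eq_C_of_derivative_eq_zero <| by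
    simpa using (derivative' (R := B)).map_eq_zero_of_isIdempotentElem hP

theorem Polynomial.eq_zero_of_forall_eval_natCast_eq_zero {K B : Type*} [Field K] [CharZero K]
    [CommRing B] [Algebra K B] {Q : B[X]} (hQ : ∀ k : ℕ, Q.eval (k : B) = 0) : Q = 0 := by
  ext n
  rw [coeff_zero, ← Module.forall_dual_apply_eq_zero_iff K]
  intro f
  let q : K[X] := Q.sum fun i b => monomial i (f b)
  have hq : q = 0 := by
    refine eq_zero_of_infinite_isRoot q
      (Set.infinite_of_injective_forall_mem Nat.cast_injective fun k : ℕ => ?_)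
    have : f (Q.eval (k : B)) = q.eval (k : K) := by
      rw [eval_eq_sum]
      simp only [q, Polynomial.sum, eval_finsetSum, eval_monomial, map_sum]
      refine sum_congr rfl fun i _ => ?_
      rw [← Nat.cast_pow, ← Nat.cast_pow, mul_comm, ← nsmul_eq_mul, map_nsmul, nsmul_eq_mul,
        mul_comm]
    simp [IsRoot, ← this, hQ k]
  have hn := congrArg (coeff · n) hq
  simp only [q, Polynomial.sum, finsetSum_coeff, coeff_monomial, sum_ite_eq', mem_support_iff,
    coeff_zero, ite_eq_right_iff] at hn
  by_cases h : Q.coeff n = 0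
  · simp [h]
  · exact hn h

theorem Module.End.exists_polynomial_eval_natCast_eq_pow_apply {K B : Type*} [Field K]
    [CharZero K] [CommRing B] [Algebra K B] (T : Module.End K B) {x : B} {m : ℕ}
    (hx : ((T - 1) ^ m) x = 0) : ∃ P : B[X], ∀ k : ℕ, P.eval (k : B) = (T ^ k) x := by
  set N := T - 1
  have hN : ∀ i, m ≤ i → (N ^ i) x = 0 := fun i hi => by
    rw [← Nat.sub_add_cancel hi, pow_add, Module.End.mul_apply, hx, map_zero]
  refine ⟨∑ i ∈ range m, C ((i.factorial : K)⁻¹ • (N ^ i) x) * descPochhammer B i, fun k => ?_⟩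
  calc _ = ∑ i ∈ range m, k.choose i • (N ^ i) x := by
        simp only [eval_finsetSum, eval_mul, eval_C, descPochhammer_eval_eq_descFactorial,
          Nat.descFactorial_eq_factorial_mul_choose]
        refine sum_congr rfl fun i _ => ?_
        rw [mul_comm, ← nsmul_eq_mul, ← Nat.cast_smul_eq_nsmul K, smul_smul, Nat.cast_mul,
          mul_right_comm, mul_inv_cancel₀ (Nat.cast_ne_zero.2 i.factorial_ne_zero), one_mul,
          Nat.cast_smul_eq_nsmul]
    _ = ∑ i ∈ range (m + k + 1), k.choose i • (N ^ i) x :=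
        sum_subset (range_subset_range.2 (by omega)) fun i _ hi => by
          rw [hN i (by simpa using hi), smul_zero]
    _ = ∑ i ∈ range (k + 1), k.choose i • (N ^ i) x :=
        (sum_subset (range_subset_range.2 (by omega)) fun i _ hi => by
          rw [Nat.choose_eq_zero_of_lt (by simpa using hi), zero_smul]).symm
    _ = (T ^ k) x := by
        rw [← sub_add_cancel T 1, (Commute.one_right N).add_pow, LinearMap.sum_apply]
        simp only [one_pow, mul_one, Module.End.mul_apply, Module.End.natCast_apply, map_nsmul]

theorem AlgHom.apply_eq_self_of_isIdempotentElem {K B : Type*} [Field K] [CharZero K]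
    [CommRing B] [Algebra K B] (ψ : B →ₐ[K] B) {x : B} (hx : IsIdempotentElem x) {m : ℕ}
    (hm : ((ψ.toLinearMap - 1) ^ m) x = 0) : ψ x = x := by
  have : IsAddTorsionFree B := ⟨fun n hn => by
    simpa only [← Nat.cast_smul_eq_nsmul K] using
      smul_right_injective B (Nat.cast_ne_zero.2 hn : (n : K) ≠ 0)⟩
  have hidem : ∀ k : ℕ, IsIdempotentElem ((ψ.toLinearMap ^ k) x) := fun k => by
    induction k with
    | zero => exact hx
    | succ k ih => rw [pow_succ', Module.End.mul_apply]; exact ih.map ψ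
  obtain ⟨P, hP⟩ := Module.End.exists_polynomial_eval_natCast_eq_pow_apply ψ.toLinearMap hm
  have hPP : IsIdempotentElem P := sub_eq_zero.1 <|
    eq_zero_of_forall_eval_natCast_eq_zero (K := K) fun k => by
      rw [eval_sub, eval_mul, hP, (hidem k).eq, sub_self]
  calc ψ x = P.eval ((1 : ℕ) : B) := by rw [hP, pow_one]; rfl
    _ = P.eval ((0 : ℕ) : B) := by rw [eq_C_of_isIdempotentElem hPP, eval_C, eval_C]
    _ = x := by rw [hP, pow_zero]; rfl

theorem IsIdempotentElem.mul_eq_self_of_mem_span {R : Type*} [NonUnitalCommRing R] {e x : R}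
    (he : IsIdempotentElem e) (hx : x ∈ TwoSidedIdeal.span {e}) : e * x = x := by
  induction hx using TwoSidedIdeal.span_induction with
  | mem y hy => rw [Set.mem_singleton_iff.1 hy]; exact he
  | zero => exact mul_zero e
  | add y z _ _ hy hz => rw [mul_add, hy, hz]
  | neg y _ hy => rw [mul_neg, hy]
  | left_absorb a y _ hy => rw [mul_left_comm, hy]
  | right_absorb b y _ hy => rw [← mul_assoc, hy]

section Corner

variable {K A : Type*} [Field K] [NonUnitalCommRing A] [Module K A]

variable (K) in
/-- `cornerChoose K e c j` is the binomial coefficient `c choose j` computed in the corner ring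
`e * A`, whose unit is `e`. -/
def cornerChoose (e c : A) : ℕ → A
  | 0 => e
  | j + 1 => ((j : K) + 1)⁻¹ • (cornerChoose e c j * (c - (j : K) • e))

theorem map_cornerChoose (φ : A →ₙₐ[K] A) (e c : A) (j : ℕ) :
    φ (cornerChoose K e c j) = cornerChoose K (φ e) (φ c) j := by
  induction j with
  | zero => rfl
  | succ j ih => simp only [cornerChoose, map_smul, map_mul, map_sub, ih]

theorem cornerChoose_succ_smul [CharZero K] (e c : A) (j : ℕ) :
    ((j : K) + 1) • cornerChoose K e c (j + 1) = cornerChoose K e c j * (c - (j : K) • e) := by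
  rw [cornerChoose, smul_smul, mul_inv_cancel₀ (Nat.cast_add_one_ne_zero j), one_smul]

variable [IsScalarTower K A A] {e c : A}

theorem cornerChoose_mul_self (he : IsIdempotentElem e) (hc : e * c = c) (j : ℕ) :
    cornerChoose K e c j * e = cornerChoose K e c j := by
  cases j with
  | zero => exact he
  | succ j =>
    rw [cornerChoose, smul_mul_assoc, mul_assoc, sub_mul, smul_mul_assoc, he.eq, mul_comm c, hc]

/-- Pascal's rule `(c + 1) choose (j + 1) = c choose (j + 1) + c choose j` in `e * A`. -/
theorem cornerChoose_add_succ [CharZero K] (he : IsIdempotentElem e) (hc : e * c = c) (j : ℕ) :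
    cornerChoose K e (c + e) (j + 1) = cornerChoose K e c (j + 1) + cornerChoose K e c j := by
  induction j with
  | zero => simp [cornerChoose, mul_add, hc, he.eq]
  | succ j ih =>
    set u := cornerChoose K e c
    set t : K := ((j + 1 : ℕ) : K)
    have h1 : c + e - t • e = (c - t • e) + e := by module
    have h2 : c + e - t • e = c - (j : K) • e := by push_cast [t]; module
    apply smul_right_injective A (Nat.cast_add_one_ne_zero (R := K) (j + 1))
    calc (t + 1) • cornerChoose K e (c + e) (j + 1 + 1)
        = (u (j + 1) + u j) * (c + e - t • e) := by rw [cornerChoose_succ_smul, ih]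
      _ = u (j + 1) * (c - t • e) + u (j + 1) * e + u j * (c - (j : K) • e) := by
          rw [add_mul]
          congr 1
          · rw [h1, mul_add]
          · rw [h2]
      _ = (t + 1) • (u (j + 1 + 1) + u (j + 1)) := by
          rw [← cornerChoose_succ_smul, ← cornerChoose_succ_smul, cornerChoose_mul_self he hc]
          push_cast [t]
          module

end Corner

section EDerivation

variable {K A : Type*} [Field K] [NonUnitalCommRing A] [Module K A] {δ : A →ₗ[K] A}
  {φ : A →ₙₐ[K] A}

theorem eDeriv_mul (hφ : ∀ a, δ a = a - φ a) (a b : A) : δ (a * b) = δ a * b + φ a * δ b := by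
  rw [hφ, hφ, hφ, map_mul, sub_mul, mul_sub]
  abel

theorem eDeriv_alternating_sum (hφ : ∀ a, δ a = a - φ a) (u : ℕ → A)
    (hu : ∀ j, δ (u (j + 1)) = φ (u j)) {w : A} {M : ℕ} (hM : (δ ^ M) w = 0) :
    δ (∑ k ∈ range M, (-1 : K) ^ k • (u (k + 1) * (δ ^ k) w)) = φ (u 0) * w := by
  set f : ℕ → A := fun k => (-1 : K) ^ k • (φ (u k) * (δ ^ k) w)
  have hterm : ∀ k, δ ((-1 : K) ^ k • (u (k + 1) * (δ ^ k) w)) = f k - f (k + 1) := fun k => by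
    simp only [f, pow_succ (-1 : K), mul_neg_one, neg_smul, sub_neg_eq_add, ← smul_add]
    rw [map_smul, eDeriv_mul hφ, hu, ← Module.End.mul_apply, ← pow_succ']
  rw [map_sum, sum_congr rfl fun k _ => hterm k, sum_range_sub']
  simp [f, hM]

variable [CharZero K] [IsScalarTower K A A] {e : A}

theorem eDeriv_cornerChoose_succ (hφ : ∀ a, δ a = a - φ a) (he : IsIdempotentElem e)
    (hφe : φ e = e) {c : A} (hc : e * c = c) (hδc : δ c = e) (j : ℕ) :
    δ (cornerChoose K e c (j + 1)) = φ (cornerChoose K e c j) := by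
  have hφc : φ c + e = c := by rw [← hδc, hφ, add_sub_cancel]
  have hφc' : e * φ c = φ c := by rw [← hφe, ← map_mul, hc]
  have hpascal := cornerChoose_add_succ (K := K) he hφc' j
  rw [hφc] at hpascal
  rw [hφ, map_cornerChoose, map_cornerChoose, hφe, hpascal, add_sub_cancel_left]

theorem mem_range_eDeriv_of_mul_eq_self (hφ : ∀ a, δ a = a - φ a) (he : IsIdempotentElem e)
    (hφe : φ e = e) {c : A} (hc : e * c = c) (hδc : δ c = e) {w : A} (hw : e * w = w) {M : ℕ}
    (hM : (δ ^ M) w = 0) : w ∈ LinearMap.range δ :=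
  ⟨_, (eDeriv_alternating_sum hφ _ (eDeriv_cornerChoose_succ hφ he hφe hc hδc) hM).trans <| by
    rw [cornerChoose, hφe, hw]⟩

variable [SMulCommClass K A A]

theorem NonUnitalAlgHom.apply_eq_self_of_isIdempotentElem (hφ : ∀ a, δ a = a - φ a)
    (he : IsIdempotentElem e) {m : ℕ} (hm : (δ ^ m) e = 0) : φ e = e := by
  -- polynomials need a unital coefficient ring, so we pass to the unitization
  let ψ : Unitization K A →ₐ[K] Unitization K A :=
    Unitization.lift ((Unitization.inrNonUnitalAlgHom K A).comp φ)
  have hψ : ∀ a : A, ψ a = φ a := by simp [ψ]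
  have hpow : ∀ (n : ℕ) (a : A),
      ((ψ.toLinearMap - 1) ^ n) (a : Unitization K A) = (((-δ) ^ n) a : A) := by
    intro n
    induction n with
    | zero => simp
    | succ n ih =>
      intro a
      rw [pow_succ', Module.End.mul_apply, ih, pow_succ', Module.End.mul_apply]
      simp [hψ, hφ]
  apply Unitization.inr_injective (R := K)
  rw [← hψ]
  refine ψ.apply_eq_self_of_isIdempotentElem (m := m) ?_ ?_
  · rw [IsIdempotentElem, ← Unitization.inr_mul, he.eq]
  · rw [hpow, neg_pow, Module.End.mul_apply, hm, map_zero, Unitization.inr_zero]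

end EDerivation

/-- Let `K` be a field of characteristic zero, `A` a commutative
`K`-algebra, and `δ` a locally nilpotent `K`-`E`-derivation of `A`.  If `e` is an
idempotent of `A` lying in the image of `δ`, then the ideal of `A` generated by `e` is
contained in the image of `δ`. -/
theorem image_of_locally_nilpotent_Ederivation_contains_ideal_of_idempotent_comm
    {K : Type*} [Field K] [CharZero K]
    {A : Type*} [NonUnitalCommRing A] [Module K A] [SMulCommClass K A A] [IsScalarTower K A A]
    (δ : A →ₗ[K] A)
    (hEder : ∃ φ : A →ₙₐ[K] A, ∀ a : A, δ a = a - φ a)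
    (hLN : ∀ a : A, ∃ m : ℕ, 1 ≤ m ∧ (δ ^ m) a = 0)
    (e : A) (hidem : e * e = e) (him : e ∈ LinearMap.range δ) :
    ∀ x ∈ TwoSidedIdeal.span {e}, x ∈ LinearMap.range δ := by
  obtain ⟨φ, hφ⟩ := hEder
  obtain ⟨b, hb⟩ := him
  obtain ⟨m, -, hm⟩ := hLN e
  have hφe : φ e = e := φ.apply_eq_self_of_isIdempotentElem hφ hidem hm
  have hδc : δ (e * b) = e := by
    rw [eDeriv_mul hφ, hφ e, hφe, sub_self, zero_mul, zero_add, hb, hidem]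
  intro x hx
  obtain ⟨M, -, hM⟩ := hLN x
  exact mem_range_eDeriv_of_mul_eq_self hφ hidem hφe (by rw [← mul_assoc, hidem]) hδc
    (IsIdempotentElem.mul_eq_self_of_mem_span hidem hx) hM
end

section
/- Let K be a field of characteristic zero, A a unital K-algebra (not necessarily commutative), and D a locally finite K-derivation of A. If the identity element 1_A lies in the image of D, then D is surjective. -/
/-!
Pick `s` with `D s = 1`. Every `a` is annihilated by some nonzero `p(D)`, and writing
`p = X ^ n * q` with `q(0) ≠ 0`, coprimality splits `a` into a vector killed by `D ^ n` and one
killed by `q(D)`. The latter lies in the image of `D` because `q(0)` is invertible; the former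
because `D (s ^ (k + 1) * x) = (k + 1) • s ^ k * x + s ^ (k + 1) * D x` lets one lower the
nilpotency order of `x` at the cost of raising the power of `s`.
-/

open Polynomial

namespace Module.End

variable {K M : Type*} [Field K] [AddCommGroup M] [Module K M]

theorem exists_aeval_apply_eq_zero_of_finiteDimensional_span (f : Module.End K M) (v : M)
    (h : FiniteDimensional K (Submodule.span K (Set.range fun i : ℕ => (f ^ i) v))) :
    ∃ p : K[X], p ≠ 0 ∧ aeval f p v = 0 := by
  by_contra! hv
  have hli := (linearIndependent_powers_iff_aeval f v).2 fun p hp =>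
    by_contra fun hp0 => hv p hp0 hp
  exact Infinite.not_finite (linearIndependent_span hli).finite

theorem ker_aeval_le_range_of_coeff_zero_ne_zero (f : Module.End K M) {q : K[X]}
    (hq : q.coeff 0 ≠ 0) : LinearMap.ker (aeval f q) ≤ LinearMap.range f := by
  intro v hv
  have hdecomp : f (aeval f q.divX v) + q.coeff 0 • v = 0 := by
    rw [LinearMap.mem_ker, ← X_mul_divX_add q, map_add, map_mul, aeval_X, aeval_C,
      LinearMap.add_apply, Module.End.mul_apply, Module.algebraMap_end_apply] at hv
    exact hv
  refine ⟨-(q.coeff 0)⁻¹ • aeval f q.divX v, ?_⟩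
  rw [map_smul, eq_neg_of_add_eq_zero_left hdecomp, smul_neg, neg_smul, neg_neg, smul_smul,
    inv_mul_cancel₀ hq, one_smul]

end Module.End

section Derivation

variable {K A : Type*} [Field K] [Ring A] [Algebra K A] {D : A →ₗ[K] A}

theorem apply_pow_succ_of_apply_eq_one (hder : ∀ a b : A, D (a * b) = D a * b + a * D b)
    {s : A} (hs : D s = 1) (k : ℕ) : D (s ^ (k + 1)) = (k + 1) • s ^ k := by
  induction k with
  | zero => simp [hs]
  | succ k ih =>
    rw [pow_succ' s (k + 1), hder, hs, ih, one_mul, mul_smul_comm, ← pow_succ', add_comm,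
      ← succ_nsmul]

theorem pow_mul_mem_range_of_pow_apply_eq_zero [CharZero K]
    (hder : ∀ a b : A, D (a * b) = D a * b + a * D b) {s : A} (hs : D s = 1) (n : ℕ) :
    ∀ x : A, (D ^ n) x = 0 → ∀ k : ℕ, s ^ k * x ∈ LinearMap.range D := by
  induction n with
  | zero =>
    intro x hx k
    simp only [pow_zero, Module.End.one_apply] at hx
    simp [hx]
  | succ n ih =>
    intro x hx k
    have hDx : (D ^ n) (D x) = 0 := by rwa [← Module.End.mul_apply, ← pow_succ]
    obtain ⟨y, hy⟩ := ih (D x) hDx (k + 1)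
    have hk : ((k + 1 : ℕ) : K) ≠ 0 := Nat.cast_ne_zero.2 k.succ_ne_zero
    have hleibniz :
        D (s ^ (k + 1) * x) = ((k + 1 : ℕ) : K) • (s ^ k * x) + s ^ (k + 1) * D x := by
      rw [hder, apply_pow_succ_of_apply_eq_one hder hs, Nat.cast_smul_eq_nsmul, smul_mul_assoc]
    refine ⟨((k + 1 : ℕ) : K)⁻¹ • (s ^ (k + 1) * x - y), ?_⟩
    rw [map_smul, map_sub, hleibniz, hy, add_sub_cancel_right, smul_smul, inv_mul_cancel₀ hk,
      one_smul]

theorem ker_pow_le_range_of_apply_eq_one [CharZero K]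
    (hder : ∀ a b : A, D (a * b) = D a * b + a * D b) {s : A} (hs : D s = 1) (n : ℕ) :
    LinearMap.ker (D ^ n) ≤ LinearMap.range D := fun x hx => by
  simpa using pow_mul_mem_range_of_pow_apply_eq_zero hder hs n x hx 0

end Derivation

/-- Let `K` be a field of characteristic zero, `A` a unital `K`-algebra
(not necessarily commutative), and `D` a locally finite `K`-derivation of `A`.  If the
identity element `1` lies in the image of `D`, then `D` is surjective. -/
theorem surjective_of_one_mem_image_locally_finite_derivation
    {K : Type*} [Field K] [CharZero K]
    {A : Type*} [Ring A] [Algebra K A]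
    (D : A →ₗ[K] A)
    (hder : ∀ a b : A, D (a * b) = D a * b + a * D b)
    (hLF : ∀ a : A,
      FiniteDimensional K (Submodule.span K (Set.range fun i : ℕ => (D ^ i) a)))
    (h1 : (1 : A) ∈ LinearMap.range D) :
    Function.Surjective D := by
  obtain ⟨s, hs⟩ := h1
  intro a
  obtain ⟨p, hp0, hpa⟩ :=
    Module.End.exists_aeval_apply_eq_zero_of_finiteDimensional_span D a (hLF a)
  obtain ⟨q, hpq, hXq⟩ := p.exists_eq_pow_rootMultiplicity_mul_and_not_dvd hp0 0
  rw [map_zero, sub_zero] at hpq hXq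
  have hcop : IsCoprime (X ^ p.rootMultiplicity 0) q :=
    (irreducible_X.coprime_iff_not_dvd.2 hXq).pow_left
  have ha : a ∈ LinearMap.ker (aeval D p) := hpa
  rw [hpq, ← sup_ker_aeval_eq_ker_aeval_mul_of_coprime D hcop, map_pow, aeval_X] at ha
  exact sup_le (ker_pow_le_range_of_apply_eq_one hder hs _)
    (Module.End.ker_aeval_le_range_of_coeff_zero_ne_zero D (mt X_dvd_iff.2 hXq)) ha
end

section
/- Let K be a field of characteristic zero, A a unital K-algebra (not necessarily commutative), and δ a locally finite K-E-derivation of A. If the identity element 1_A lies in the image of δ, then δ is surjective. -/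
/-!
Write `δ = 1 - φ` and pick `b` with `δ b = 1`, so that `φ b = b - 1`. On polynomials in `b`,
`φ` acts as the shift `X ↦ X - 1`, hence the rising factorials `P k = b (b + 1) ⋯ (b + k - 1)`
satisfy `δ (P (k + 1)) = (k + 1) P k`, a discrete analogue of `(X ^ (k + 1))' = (k + 1) X ^ k`.
The twisted Leibniz rule `x δ(c) = δ(x c) - δ(x) φ(c)` then shows, by induction on the order of
nilpotency of `x`, that `x P k ∈ δ(A)` whenever `δ ^ N x = 0`; with `k = 0`, every `ker δ ^ N`
lies in `δ(A)`. Finally, local finiteness gives `p ≠ 0` with `p(δ) a = 0`; writing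
`p = X ^ n q` with `q(0) ≠ 0` splits `a` into a multiple of `δ(⋯)` plus an element of `ker δ ^ n`.
-/

open Polynomial Submodule LinearMap

namespace Module.End

variable {K M : Type*} [Field K] [AddCommGroup M] [Module K M]

theorem exists_ne_zero_aeval_apply_eq_zero (f : Module.End K M) (a : M)
    [FiniteDimensional K (span K (Set.range fun i : ℕ => (f ^ i) a))] :
    ∃ p : K[X], p ≠ 0 ∧ aeval f p a = 0 := by
  set V := span K (Set.range fun i : ℕ => (f ^ i) a)
  have hmem (p : K[X]) : aeval f p a ∈ V := by
    rw [aeval_eq_sum_range, LinearMap.sum_apply]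
    exact sum_mem fun i _ => V.smul_mem _ (subset_span ⟨i, rfl⟩)
  let L : K[X] →ₗ[K] V :=
    codRestrict V ((applyₗ a).comp (aeval f).toLinearMap) hmem
  by_contra! h
  have hL : Function.Injective L := (injective_iff_map_eq_zero L).2 fun p hp => by
    by_contra hp0
    exact h p hp0 (congrArg Subtype.val hp)
  exact Polynomial.not_finite (Module.Finite.of_injective L hL)

theorem exists_mem_range_sup_ker_pow_of_aeval_apply_eq_zero {f : Module.End K M} {a : M}
    {p : K[X]} (hp : p ≠ 0) (ha : aeval f p a = 0) :
    ∃ n, a ∈ range f ⊔ ker (f ^ n) := by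
  obtain ⟨q, hpq, hq⟩ := p.exists_eq_pow_rootMultiplicity_mul_and_not_dvd hp 0
  rw [map_zero, sub_zero] at hpq hq
  rw [X_dvd_iff] at hq
  set n := p.rootMultiplicity 0
  refine ⟨n, ?_⟩
  have hker : aeval f q a ∈ ker (f ^ n) := by
    have hpow : f ^ n = aeval f (X ^ n : K[X]) := by simp
    rw [mem_ker, hpow, ← Module.End.mul_apply, ← map_mul, ← hpq, ha]
  have hdecomp : aeval f q a = f (aeval f q.divX a) + q.coeff 0 • a := by
    have h := congrArg (fun r => aeval f r a) (X_mul_divX_add q)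
    simp only [map_add, map_mul, aeval_X, aeval_C, LinearMap.add_apply, Module.End.mul_apply,
      Module.algebraMap_end_apply] at h
    exact h.symm
  rw [← Submodule.smul_mem_iff _ hq, eq_sub_of_add_eq' hdecomp.symm]
  exact sub_mem (mem_sup_right hker) (mem_sup_left (mem_range_self f _))

end Module.End

theorem Polynomial.ascPochhammer_succ_sub_comp_X_sub_one (R : Type*) [CommRing R] (k : ℕ) :
    ascPochhammer R (k + 1) - (ascPochhammer R (k + 1)).comp (X - 1) =
      (k + 1) • ascPochhammer R k := by
  have hshift : (ascPochhammer R (k + 1)).comp (X - 1) = (X - 1) * ascPochhammer R k := by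
    rw [ascPochhammer_succ_left, mul_comp, comp_assoc, X_comp]
    simp
  rw [hshift, ascPochhammer_succ_right]
  simp only [nsmul_eq_mul]
  push_cast
  ring

namespace EDerivation

section CommRing

variable {K A : Type*} [CommRing K] [Ring A] [Algebra K A] {δ : A →ₗ[K] A} {φ : A →ₐ[K] A}

theorem mul_apply_eq_sub (hδ : ∀ a, δ a = a - φ a) (a c : A) :
    a * δ c = δ (a * c) - δ a * φ c := by
  simp only [hδ, map_mul]
  noncomm_ring

theorem apply_aeval_ascPochhammer_succ (hδ : ∀ a, δ a = a - φ a) {b : A} (hb : δ b = 1)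
    (k : ℕ) : δ (aeval b (ascPochhammer K (k + 1))) = (k + 1) • aeval b (ascPochhammer K k) := by
  have hφb : φ b = b - 1 := by rw [← hb, hδ, sub_sub_cancel]
  calc δ (aeval b (ascPochhammer K (k + 1)))
      = aeval b (ascPochhammer K (k + 1)) - aeval (b - 1) (ascPochhammer K (k + 1)) := by
        rw [hδ, ← aeval_algHom_apply, hφb]
    _ = aeval b (ascPochhammer K (k + 1) - (ascPochhammer K (k + 1)).comp (X - 1)) := by
        simp [aeval_comp]
    _ = (k + 1) • aeval b (ascPochhammer K k) := by
        rw [ascPochhammer_succ_sub_comp_X_sub_one, map_nsmul]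

end CommRing

variable {K A : Type*} [Field K] [CharZero K] [Ring A] [Algebra K A] {δ : A →ₗ[K] A}
  {φ : A →ₐ[K] A}

theorem mul_aeval_ascPochhammer_mem_range (hδ : ∀ a, δ a = a - φ a) {b : A} (hb : δ b = 1)
    (N : ℕ) {x : A} (hx : (δ ^ N) x = 0) (k : ℕ) :
    x * aeval b (ascPochhammer K k) ∈ range δ := by
  induction N generalizing x k with
  | zero => simp_all
  | succ N ih =>
    have hδx : (δ ^ N) (δ x) = 0 := by rwa [← Module.End.mul_apply, ← pow_succ]
    set P : ℕ → A := fun j => aeval b (ascPochhammer K j)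
    have hP : δ (P (k + 1)) = (k + 1 : K) • P k := by
      rw [apply_aeval_ascPochhammer_succ hδ hb, ← Nat.cast_smul_eq_nsmul K]
      push_cast; rfl
    have hφP : φ (P (k + 1)) = P (k + 1) - (k + 1 : K) • P k := by
      rw [← hP, hδ, sub_sub_cancel]
    have key : (k + 1 : K) • (x * P k) =
        δ (x * P (k + 1)) - (δ x * P (k + 1) - (k + 1 : K) • (δ x * P k)) :=
      calc (k + 1 : K) • (x * P k) = x * δ (P (k + 1)) := by rw [hP, mul_smul_comm]
        _ = δ (x * P (k + 1)) - δ x * φ (P (k + 1)) := mul_apply_eq_sub hδ x _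
        _ = _ := by rw [hφP, mul_sub, mul_smul_comm]
    have hk : (k + 1 : K) ≠ 0 := Nat.cast_add_one_ne_zero k
    rw [← smul_mem_iff _ hk, key]
    exact sub_mem (mem_range_self δ _) (sub_mem (ih hδx _) (smul_mem _ _ (ih hδx _)))

theorem ker_pow_le_range (hδ : ∀ a, δ a = a - φ a) (h1 : (1 : A) ∈ range δ) (N : ℕ) :
    ker (δ ^ N) ≤ range δ := by
  obtain ⟨b, hb⟩ := h1
  intro x hx
  simpa using mul_aeval_ascPochhammer_mem_range hδ hb N hx 0

end EDerivation

/-- Let `K` be a field of characteristic zero, `A` a unital `K`-algebra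
(not necessarily commutative), and `δ` a locally finite `K`-`E`-derivation of `A`
(i.e. `δ = Id - φ` for some `K`-algebra endomorphism `φ` of `A`).  If the identity
element `1` lies in the image of `δ`, then `δ` is surjective. -/
theorem surjective_of_one_mem_image_locally_finite_Ederivation
    {K : Type*} [Field K] [CharZero K]
    {A : Type*} [Ring A] [Algebra K A]
    (δ : A →ₗ[K] A)
    (hEder : ∃ φ : A →ₐ[K] A, ∀ a : A, δ a = a - φ a)
    (hLF : ∀ a : A,
      FiniteDimensional K (Submodule.span K (Set.range fun i : ℕ => (δ ^ i) a)))
    (h1 : (1 : A) ∈ LinearMap.range δ) :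
    Function.Surjective δ := by
  obtain ⟨φ, hδ⟩ := hEder
  intro a
  have := hLF a
  obtain ⟨p, hp, hpa⟩ := Module.End.exists_ne_zero_aeval_apply_eq_zero δ a
  obtain ⟨n, hn⟩ := Module.End.exists_mem_range_sup_ker_pow_of_aeval_apply_eq_zero hp hpa
  exact sup_le le_rfl (EDerivation.ker_pow_le_range hδ h1 n) hn
end

section
/- Let B be a ring and δ an E-derivation of B, i.e., δ = Id_B − φ for some ring endomorphism φ of B. Then for all a, b ∈ B and all n ≥ 1, δ^n(ab) = Σ_{i=0}^{n} C(n,i) · δ^i(a) · δ^{n−i}((Id_B − δ)^i(b)), where C(n,i) denotes the binomial coefficient. -/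
/-- **generalized Leibniz rule for E-derivations.** Let `B` be a ring and
`δ = Id − φ` an `E`-derivation of `B`, where `φ` is a ring endomorphism of `B`.  Then for
all `a, b ∈ B` and `n ≥ 1`,
`δ^n(ab) = Σ_{i=0}^n C(n,i) · δ^i(a) · δ^{n−i}((Id − δ)^i(b))`. -/
theorem Ederivation_iterate_mul
    {B : Type*} [NonUnitalRing B] (φ : B →ₙ+* B) (δ : B → B)
    (hδ : ∀ b : B, δ b = b - φ b) :
    ∀ (a b : B) (n : ℕ), 1 ≤ n →
      δ^[n] (a * b) = ∑ i ∈ Finset.range (n + 1),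
        n.choose i • (δ^[i] a * δ^[n - i] ((fun x : B => x - δ x)^[i] b)) := by
  have hfun : (fun x : B => x - δ x) = ⇑φ := by
    funext x; rw [hδ]; abel
  have hadd : ∀ x y : B, δ (x + y) = δ x + δ y := by
    intro x y; simp only [hδ, map_add]; abel
  set D : B →+ B := { toFun := δ, map_zero' := by simp [hδ], map_add' := hadd } with hD
  have hc : ∀ y : B, φ (δ y) = δ (φ y) := by
    intro y; simp [hδ, map_sub]
  have hcomm : ∀ (k : ℕ) (x : B), φ (δ^[k] x) = δ^[k] (φ x) := by
    intro k
    induction k with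
    | zero => intro x; simp
    | succ k ih =>
      intro x
      rw [Function.iterate_succ_apply', Function.iterate_succ_apply', hc, ih]
  have hmul : ∀ x y : B, δ (x * y) = x * δ y + δ x * φ y := by
    intro x y
    simp only [hδ, map_mul, mul_sub, sub_mul]
    abel
  intro a b
  suffices h : ∀ n : ℕ, δ^[n] (a * b) = ∑ i ∈ Finset.range (n + 1),
      n.choose i • (δ^[i] a * δ^[n - i] ((⇑φ)^[i] b)) by
    intro n _; rw [hfun]; exact h n
  intro n
  induction n with
  | zero => simp
  | succ n ih =>
    rw [Function.iterate_succ_apply', ih]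
    have step : δ (∑ i ∈ Finset.range (n + 1),
          n.choose i • (δ^[i] a * δ^[n - i] ((⇑φ)^[i] b)))
        = ∑ i ∈ Finset.range (n + 1), n.choose i •
            (δ^[i] a * δ^[n + 1 - i] ((⇑φ)^[i] b)
              + δ^[i + 1] a * δ^[n - i] ((⇑φ)^[i + 1] b)) := by
      show D _ = _
      rw [map_sum]
      refine Finset.sum_congr rfl fun i hi => ?_
      rw [Finset.mem_range, Nat.lt_succ_iff] at hi
      rw [map_nsmul]
      congr 1
      show δ _ = _
      rw [hmul]
      congr 1
      · congr 1
        rw [← Function.iterate_succ_apply' δ (n - i), ← Nat.succ_sub hi]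
      · congr 1
        · exact (Function.iterate_succ_apply' δ i a).symm
        · rw [hcomm, ← Function.iterate_succ_apply' φ i b]
    rw [step]
    have hf : ∀ i, i ≤ n → δ^[i + 1] a * δ^[n - i] ((⇑φ)^[i + 1] b)
        = δ^[i + 1] a * δ^[n + 1 - (i + 1)] ((⇑φ)^[i + 1] b) := by
      intro i hi; rw [Nat.succ_sub_succ]
    set f : ℕ → B := fun i => δ^[i] a * δ^[n + 1 - i] ((⇑φ)^[i] b) with hfdef
    have lhs : ∑ i ∈ Finset.range (n + 1), n.choose i •
            (δ^[i] a * δ^[n + 1 - i] ((⇑φ)^[i] b)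
              + δ^[i + 1] a * δ^[n - i] ((⇑φ)^[i + 1] b))
        = (∑ i ∈ Finset.range (n + 1), n.choose i • f i)
          + ∑ i ∈ Finset.range (n + 1), n.choose i • f (i + 1) := by
      rw [← Finset.sum_add_distrib]
      refine Finset.sum_congr rfl fun i hi => ?_
      rw [Finset.mem_range, Nat.lt_succ_iff] at hi
      rw [← smul_add]
      congr 1
      rw [hf i hi]
    rw [lhs]
    have rhs : ∑ i ∈ Finset.range (n + 1 + 1), (n + 1).choose i • f i
        = (∑ i ∈ Finset.range (n + 1), n.choose i • f i)
          + ∑ i ∈ Finset.range (n + 1), n.choose i • f (i + 1) := by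
      rw [Finset.sum_range_succ']
      have : ∀ i ∈ Finset.range (n + 1), (n + 1).choose (i + 1) • f (i + 1)
          = n.choose i • f (i + 1) + n.choose (i + 1) • f (i + 1) := by
        intro i _
        rw [Nat.choose_succ_succ, add_smul]
      rw [Finset.sum_congr rfl this, Finset.sum_add_distrib]
      have h2 : (∑ i ∈ Finset.range (n + 1), n.choose (i + 1) • f (i + 1))
          + (n + 1).choose 0 • f 0
          = ∑ i ∈ Finset.range (n + 1 + 1), n.choose i • f i := by
        rw [Finset.sum_range_succ' (fun i => n.choose i • f i) (n + 1)]
        simp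
      rw [add_assoc, h2, Finset.sum_range_succ (fun i => n.choose i • f i) (n + 1),
        Nat.choose_succ_self, zero_smul, add_zero, add_comm]
    rw [rhs]
end

section
/- Let K be a field of characteristic zero and A a unital K-algebra. If δ is either a K-derivation of A or a locally nilpotent K-E-derivation of A, then every central idempotent e of A satisfies δ(e) = 0. -/
open Function

section EDerAux

universe u

private lemma eD_key {B : Type u} [CommRing B] (ψ : B →+* B) (e : B) (he : e * e = e) (r : ℕ) :
    (fun x => x - ψ x)^[r] e =
      ∑ j ∈ Finset.range (r + 1), (r.choose j) •
        ((fun x => x - ψ x)^[j] e * (⇑ψ)^[j] ((fun x => x - ψ x)^[r - j] e)) := by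
  set d : B → B := fun x => x - ψ x with hd
  have hdsub : ∀ x, d x = x - ψ x := fun x => rfl
  have hdmul : ∀ x y, d (x * y) = d x * y + x * d y - d x * d y := by
    intro x y
    simp only [hdsub, map_mul]
    ring
  have hdψ : ∀ (j : ℕ) (x : B), d ((⇑ψ)^[j] x) = (⇑ψ)^[j] (d x) := by
    intro j x
    simp only [hdsub]
    rw [iterate_map_sub, ← Function.iterate_succ_apply, Function.iterate_succ_apply']
  induction r with
  | zero => simp [he]
  | succ r ih =>
    rw [Function.iterate_succ_apply', ih]
    have hadd : d (∑ j ∈ Finset.range (r + 1), (r.choose j) •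
        (d^[j] e * (⇑ψ)^[j] (d^[r - j] e))) =
        ∑ j ∈ Finset.range (r + 1), (r.choose j) •
          d (d^[j] e * (⇑ψ)^[j] (d^[r - j] e)) := by
      simp only [hdsub, smul_sub, map_sum, map_nsmul, Finset.sum_sub_distrib]
    rw [hadd]
    -- per-term rewrite
    have hterm : ∀ j ∈ Finset.range (r + 1),
        (r.choose j) • d (d^[j] e * (⇑ψ)^[j] (d^[r - j] e)) =
        (r.choose j) • (d^[j] e * (⇑ψ)^[j] (d^[r + 1 - j] e))
          + (r.choose j) • (d^[j+1] e * (⇑ψ)^[j+1] (d^[r - j] e)) := by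
      intro j hj
      rw [Finset.mem_range] at hj
      have h1 : d (d^[j] e * (⇑ψ)^[j] (d^[r - j] e)) =
          d^[j] e * (⇑ψ)^[j] (d^[r + 1 - j] e) + d^[j+1] e * (⇑ψ)^[j+1] (d^[r - j] e) := by
        rw [hdmul]
        have e1 : d (d^[j] e) = d^[j+1] e := (Function.iterate_succ_apply' d j e).symm
        have e2 : d ((⇑ψ)^[j] (d^[r - j] e)) = (⇑ψ)^[j] (d^[r + 1 - j] e) := by
          rw [hdψ]
          congr 1
          rw [← Function.iterate_succ_apply' d (r - j) e]
          congr 1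
          omega
        rw [e1, e2]
        have e3 : (⇑ψ)^[j] (d^[r - j] e) - (⇑ψ)^[j] (d^[r + 1 - j] e)
            = (⇑ψ)^[j+1] (d^[r - j] e) := by
          have : d^[r + 1 - j] e = d (d^[r - j] e) := by
            rw [← Function.iterate_succ_apply' d (r - j) e]
            congr 1
            omega
          rw [this, ← iterate_map_sub]
          have : d^[r-j] e - d (d^[r-j] e) = ψ (d^[r-j] e) := by
            simp [hdsub]
          rw [this]
          exact (Function.iterate_succ_apply (⇑ψ) j _).symm
        rw [← e3, mul_sub]
        ring
      rw [h1, smul_add]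
    rw [Finset.sum_congr rfl hterm, Finset.sum_add_distrib]
    -- now combine via Pascal
    set X : ℕ → B := fun j => d^[j] e * (⇑ψ)^[j] (d^[r + 1 - j] e) with hX
    have hX2 : ∀ j ∈ Finset.range (r+1),
        (r.choose j) • (d^[j+1] e * (⇑ψ)^[j+1] (d^[r - j] e)) = (r.choose j) • X (j+1) := by
      intro j hj
      rw [Finset.mem_range] at hj
      have : r - j = r + 1 - (j + 1) := by omega
      rw [hX]
      simp only [this]
    rw [Finset.sum_congr rfl hX2]
    have lhs1 : ∑ j ∈ Finset.range (r+1), (r.choose j) • X j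
        = ∑ j ∈ Finset.range (r+2), (r.choose j) • X j := by
      rw [Finset.sum_range_succ (fun j => (r.choose j) • X j) (r+1)]
      simp [Nat.choose_succ_self]
    have lhs2 : ∑ j ∈ Finset.range (r+1), (r.choose j) • X (j+1)
        = ∑ j ∈ Finset.range (r+2), (if j = 0 then 0 else r.choose (j-1)) • X j := by
      rw [Finset.sum_range_succ' (fun j => (if j = 0 then 0 else r.choose (j-1)) • X j) (r+1)]
      simp
    rw [lhs1, lhs2, ← Finset.sum_add_distrib]
    apply Finset.sum_congr rfl
    intro j hj
    rw [← add_smul]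
    congr 1
    rcases j with _ | i
    · simp
    · simp only [if_neg (Nat.succ_ne_zero i), Nat.add_sub_cancel]
      rw [Nat.choose_succ_succ r i]
      simp [Nat.succ_eq_add_one]
      omega

end EDerAux

private lemma eD_nilpotent : ∀ (n : ℕ) {B : Type u} [CommRing B] [Algebra ℚ B]
    (ψ : B →+* B) (e : B), e * e = e → (fun x => x - ψ x)^[n] e = 0 →
    IsNilpotent (e - ψ e) := by
  intro n
  induction n with
  | zero =>
    intro B _ _ ψ e he h0
    simp only [Function.iterate_zero, id_eq] at h0
    exact ⟨1, by simp [h0]⟩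
  | succ n ih =>
    intro B _ _ ψ e he h1
    rcases Nat.eq_zero_or_pos n with hn | hn
    · subst hn
      refine ⟨1, by simpa using h1⟩
    · set d : B → B := fun x => x - ψ x with hd
      have hd0 : d 0 = 0 := by simp [hd]
      have hhi : ∀ j, n + 1 ≤ j → d^[j] e = 0 := by
        intro j hj
        have h2 : d^[j] e = d^[j - (n+1)] (d^[n+1] e) := by
          rw [← Function.iterate_add_apply]
          congr 1
          omega
        rw [h2, h1, Function.iterate_fixed hd0]
      set w : B := d^[n] e with hw
      have hdw : d w = 0 := by
        rw [hw, ← Function.iterate_succ_apply' d n e]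
        exact h1
      have hψw : ψ w = w := by
        have h' : w - ψ w = 0 := hdw
        exact (sub_eq_zero.1 h').symm
      have hψiterw : ∀ j, (⇑ψ)^[j] w = w := fun j => Function.iterate_fixed hψw j
      -- key identity at r = 2n
      have hkey := eD_key ψ e he (2*n)
      rw [Finset.sum_eq_single n ?h1 ?h2] at hkey
      case h1 =>
        intro j hjmem hjne
        rw [Finset.mem_range] at hjmem
        rcases Nat.lt_or_ge j n with hlt | hge
        · have : d^[2*n - j] e = 0 := hhi _ (by omega)
          rw [this, Function.iterate_fixed (map_zero ψ)]
          simp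
        · have hj1 : n + 1 ≤ j := by omega
          rw [hhi j hj1]
          simp
      case h2 => intro hmem; exact absurd (Finset.mem_range.2 (by omega)) hmem
      have h2n : d^[2*n] e = 0 := hhi _ (by omega)
      rw [h2n] at hkey
      have hnn : 2*n - n = n := by omega
      rw [hnn, hψiterw] at hkey
      have hw2 : w * w = 0 := by
        have hC : (((2*n).choose n : ℕ) : ℚ) ≠ 0 := by
          exact_mod_cast (Nat.choose_pos (by omega : n ≤ 2*n)).ne'
        have h3 : (((2*n).choose n : ℕ) : ℚ) • (w * w) = 0 := by
          rw [Nat.cast_smul_eq_nsmul]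
          exact hkey.symm
        have := congrArg (fun x => (((2*n).choose n : ℕ) : ℚ)⁻¹ • x) h3
        simpa [smul_smul, inv_mul_cancel₀ hC] using this
      -- quotient by (w)
      set I : Ideal B := Ideal.span {w} with hI
      have hψI : ∀ x ∈ I, ψ x ∈ I := by
        intro x hx
        obtain ⟨a, ha⟩ := Ideal.mem_span_singleton'.1 hx
        refine Ideal.mem_span_singleton'.2 ⟨ψ a, ?_⟩
        rw [← ha, map_mul, hψw]
      set mk : B →+* B ⧸ I := Ideal.Quotient.mk I with hmk
      set ψ' : B ⧸ I →+* B ⧸ I :=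
        Ideal.Quotient.lift I (mk.comp ψ)
          (fun x hx => Ideal.Quotient.eq_zero_iff_mem.2 (hψI x hx)) with hψ'
      have hψ'mk : ∀ x : B, ψ' (mk x) = mk (ψ x) := fun x => Ideal.Quotient.lift_mk I _ _
      have hcompat : ∀ (j : ℕ) (x : B),
          (fun y => y - ψ' y)^[j] (mk x) = mk (d^[j] x) := by
        intro j
        induction j with
        | zero => intro x; simp
        | succ j ihj =>
          intro x
          rw [Function.iterate_succ_apply', ihj, Function.iterate_succ_apply']
          show mk (d^[j] x) - ψ' (mk (d^[j] x)) = mk (d (d^[j] x))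
          rw [hψ'mk, ← map_sub]
      have he' : mk e * mk e = mk e := by rw [← map_mul, he]
      have h0' : (fun y => y - ψ' y)^[n] (mk e) = 0 := by
        rw [hcompat, ← hw]
        exact Ideal.Quotient.eq_zero_iff_mem.2 (Ideal.subset_span rfl)
      obtain ⟨N, hN⟩ := ih ψ' (mk e) he' h0'
      have hNmk : mk ((e - ψ e) ^ N) = 0 := by
        rw [map_pow, map_sub, ← hψ'mk]
        exact hN
      obtain ⟨c, hc⟩ := Ideal.mem_span_singleton'.1 (Ideal.Quotient.eq_zero_iff_mem.1 hNmk)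
      refine ⟨(N + 1) * 2, ?_⟩
      rw [pow_mul]
      have h4 : (e - ψ e) ^ (N + 1) = (e - ψ e) * (c * w) := by
        rw [pow_succ, mul_comm ((e - ψ e)^N) (e - ψ e), hc]
      rw [h4]
      have : ((e - ψ e) * (c * w)) ^ 2 = ((e - ψ e) * c) ^ 2 * (w * w) := by ring
      rw [this, hw2, mul_zero]

/-- Let `K` be a field of characteristic zero and `A` a unital
`K`-algebra.  If `δ` is either a `K`-derivation of `A` or a locally nilpotent
`K`-`E`-derivation of `A`, then every central idempotent `e` of `A` satisfies
`δ(e) = 0`. -/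
theorem central_idempotent_mem_kernel
    {K : Type*} [Field K] [CharZero K]
    {A : Type*} [Ring A] [Algebra K A]
    (δ : A →ₗ[K] A)
    (hδ : (∀ a b : A, δ (a * b) = δ a * b + a * δ b) ∨
      ((∃ φ : A →ₐ[K] A, ∀ a : A, δ a = a - φ a) ∧
        ∀ a : A, ∃ m : ℕ, 1 ≤ m ∧ (δ ^ m) a = 0))
    (e : A) (hidem : e * e = e) (hcentral : ∀ a : A, e * a = a * e) :
    δ e = 0 := by
  rcases hδ with hder | ⟨⟨φ, hφ⟩, hLN⟩
  · -- derivation case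
    have h := hder e e
    rw [hidem] at h
    rw [← hcentral (δ e)] at h
    -- h : δ e = e * δ e + e * δ e
    have h2 : e * δ e = e * δ e + e * δ e := by
      conv_lhs => rw [h]
      rw [mul_add, ← mul_assoc, hidem]
    have h3 : e * δ e = 0 := left_eq_add.1 h2
    rw [h, h3, add_zero]
  · -- E-derivation case
    have hφa : ∀ a : A, φ a = a - δ a := by
      intro a; rw [hφ a, sub_sub_cancel]
    have hsurj : ∀ b : A, ∃ a : A, φ a = b := by
      intro b
      obtain ⟨m, -, hm⟩ := hLN b
      refine ⟨∑ k ∈ Finset.range m, (δ ^ k) b, ?_⟩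
      rw [hφa, map_sum]
      have hstep : ∀ k, δ ((δ ^ k) b) = (δ ^ (k+1)) b := by
        intro k; rw [pow_succ', Module.End.mul_apply]
      calc (∑ k ∈ Finset.range m, (δ ^ k) b) - ∑ k ∈ Finset.range m, δ ((δ ^ k) b)
          = ∑ k ∈ Finset.range m, ((δ ^ k) b - (δ ^ (k+1)) b) := by
            rw [Finset.sum_sub_distrib]
            congr 1
            exact Finset.sum_congr rfl fun k _ => hstep k
        _ = (δ ^ 0) b - (δ ^ m) b := Finset.sum_range_sub' (fun k => (δ ^ k) b) m
        _ = b := by rw [hm, pow_zero, Module.End.one_apply, sub_zero]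
    have hφc : ∀ x : A, (∀ g : A, g * x = x * g) → ∀ g : A, g * φ x = φ x * g := by
      intro x hx g
      obtain ⟨c, hc⟩ := hsurj g
      rw [← hc, ← map_mul, ← map_mul, hx c]
    set Z := Subring.center A with hZ
    let ψ : Z →+* Z :=
      { toFun := fun x => ⟨φ x.1, Subring.mem_center_iff.2 (hφc x.1 (Subring.mem_center_iff.1 x.2))⟩
        map_one' := by ext; simp
        map_mul' := fun x y => by ext; simp
        map_zero' := by ext; simp
        map_add' := fun x y => by ext; simp }
    haveI : Algebra ℚ Z :=
      RingHom.toAlgebra (RingHom.codRestrict ((algebraMap K A).comp (algebraMap ℚ K)) Z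
        (fun q => Subring.mem_center_iff.2 (fun g => by
          simpa [RingHom.comp_apply] using (Algebra.commutes (algebraMap ℚ K q) g).symm)))
    set eZ : Z := ⟨e, Subring.mem_center_iff.2 (fun g => (hcentral g).symm)⟩ with heZ
    have hiter : ∀ j : ℕ, (((fun x => x - ψ x)^[j] eZ : Z) : A) = (δ ^ j) e := by
      intro j
      induction j with
      | zero => simp [heZ]
      | succ j ihj =>
        rw [Function.iterate_succ_apply']
        have hcoe : (((fun x : Z => x - ψ x) ((fun x : Z => x - ψ x)^[j] eZ) : Z) : A)
            = (((fun x : Z => x - ψ x)^[j] eZ : Z) : A)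
              - φ (((fun x : Z => x - ψ x)^[j] eZ : Z) : A) := by
          push_cast [ψ]
          rfl
        rw [hcoe, ihj, hφa ((δ ^ j) e), sub_sub_cancel, pow_succ', Module.End.mul_apply]
    obtain ⟨m, -, hm⟩ := hLN e
    have h0 : (fun x => x - ψ x)^[m] eZ = 0 := by
      apply Subtype.ext
      rw [hiter m, hm]
      rfl
    have he' : eZ * eZ = eZ := Subtype.ext hidem
    obtain ⟨N, hN⟩ := eD_nilpotent m ψ eZ he' h0
    set u : Z := eZ - ψ eZ with hu
    have hf' : ψ eZ * ψ eZ = ψ eZ := by rw [← map_mul, he']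
    have hcube : u ^ 3 = u := by
      rw [hu]
      linear_combination (eZ - 3 * ψ eZ + 1) * he' + (3 * eZ - ψ eZ - 1) * hf'
    have h2k : ∀ k : ℕ, u ^ (2*k+1) = u := by
      intro k
      induction k with
      | zero => simp
      | succ k ihk =>
        have h5 : 2*(k+1)+1 = (2*k+1) + 2 := by ring
        calc u ^ (2*(k+1)+1) = u ^ (2*k+1) * u ^ 2 := by rw [h5, pow_add]
          _ = u * u ^ 2 := by rw [ihk]
          _ = u ^ 3 := by ring
          _ = u := hcube
    have hz : u = 0 := by
      have h6 := h2k N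
      have hsplit : u ^ (2*N+1) = u ^ N * u ^ (N+1) := by
        rw [← pow_add]
        congr 1
        omega
      rw [hsplit, hN, zero_mul] at h6
      exact h6.symm
    have hval : ((u : Z) : A) = δ e := by
      rw [hu]
      push_cast [ψ]
      rw [heZ]
      show e - φ e = δ e
      exact (hφ e).symm
    rw [← hval, hz]
    rfl
end

section
/- Let K be a field of characteristic zero, A a K-algebra, and D a locally nilpotent K-derivation of A. Let e be an idempotent with D(e) = 0 and let s ∈ eAe satisfy D(s) = e; adopt the convention s⁰ = e. Define φ_{−s}(a) = Σ_{i≥0} ((−1)^i/i!) D^i(a) s^i and ψ_{−s}(a) = Σ_{i≥0} ((−1)^i/i!) s^i D^i(a) (finite sums for each a ∈ A). Then for every a ∈ A: (i) D(φ_{−s}(a)) = 0 and D(ψ_{−s}(a)) = 0; (ii) ae = Σ_{j≥0} (1/j!) φ_{−s}(D^j(a)) s^j; and (iii) ea = Σ_{j≥0} (1/j!) s^j ψ_{−s}(D^j(a)). -/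
open Finset

/-!
Since `D (s^(i+1)) = (i+1) s^i`, the derivative of the `i`-th term of `φ_{-s}(a)` cancels the
`D`-part of the derivative of the `(i+1)`-st, so `D (φ_{-s}(a))` telescopes to a multiple of
`D^N a = 0`. Expanding the right side of (ii) gives `Σ_k c_k D^k(a) s^k`, where `c_k` is the
`k`-th coefficient of `e^{-x} e^x = 1`; only `k = 0` survives. (iii) and the `ψ`-half of (i)
are the same computations with the multiplication reversed.
-/

section Coefficients

variable {K : Type*} [Field K] [CharZero K]

lemma neg_one_pow_succ_mul_inv_factorial_succ_mul (n : ℕ) :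
    (-1 : K) ^ (n + 1) * ((n + 1).factorial : K)⁻¹ * ((n + 1 : ℕ) : K)
      = -((-1 : K) ^ n * (n.factorial : K)⁻¹) := by
  rw [Nat.factorial_succ, pow_succ]
  push_cast
  field_simp

lemma sum_range_succ_neg_one_pow_mul_inv_factorial_mul_inv_factorial (k : ℕ) :
    ∑ i ∈ range (k + 1), (-1 : K) ^ i * (i.factorial : K)⁻¹ * ((k - i).factorial : K)⁻¹
      = if k = 0 then 1 else 0 := by
  have hterm : ∀ i ∈ range (k + 1),
      (-1 : K) ^ i * (i.factorial : K)⁻¹ * ((k - i).factorial : K)⁻¹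
        = (-1) ^ i * (k.choose i : K) * (k.factorial : K)⁻¹ := by
    intro i hi
    have hk : (k.factorial : K) ≠ 0 := Nat.cast_ne_zero.2 k.factorial_ne_zero
    rw [Nat.cast_choose K (Nat.lt_succ_iff.mp (mem_range.mp hi))]
    field_simp
  have hchoose := congrArg (Int.cast (R := K)) (Int.alternating_sum_range_choose (n := k))
  push_cast at hchoose
  rw [sum_congr rfl hterm, ← sum_mul, hchoose]
  split_ifs with hk <;> simp [hk]

lemma sum_inv_factorial_smul_sum_neg_one_pow_smul {M : Type*} [AddCommGroup M] [Module K M]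
    {G : ℕ → M} {n : ℕ} (hG : ∀ k, n ≤ k → G k = 0) :
    ∑ j ∈ range n, (j.factorial : K)⁻¹ •
        ∑ i ∈ range n, ((-1 : K) ^ i * (i.factorial : K)⁻¹) • G (i + j) = G 0 := by
  have htrunc : ∀ i ∈ range n,
      ∑ j ∈ range n, ((-1 : K) ^ i * (i.factorial : K)⁻¹ * (j.factorial : K)⁻¹) • G (i + j)
        = ∑ j ∈ range (n - i),
            ((-1 : K) ^ i * (i.factorial : K)⁻¹ * (j.factorial : K)⁻¹) • G (i + j) := by
    refine fun i _ => (sum_subset (range_subset_range.2 (Nat.sub_le n i)) fun j hj hji => ?_).symm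
    rw [hG _ (by simp only [mem_range] at hj hji; omega), smul_zero]
  have hdiag : ∀ k ∈ range n,
      ∑ i ∈ range (k + 1),
          ((-1 : K) ^ i * (i.factorial : K)⁻¹ * ((k - i).factorial : K)⁻¹) • G (i + (k - i))
        = (if k = 0 then (1 : K) else 0) • G k := by
    intro k _
    rw [← sum_range_succ_neg_one_pow_mul_inv_factorial_mul_inv_factorial, sum_smul]
    refine sum_congr rfl fun i hi => ?_
    rw [Nat.add_sub_cancel' (Nat.lt_succ_iff.mp (mem_range.mp hi))]
  simp only [smul_sum, smul_smul]
  rw [sum_comm, sum_congr rfl fun i _ => sum_congr rfl fun j _ => by rw [mul_comm],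
    sum_congr rfl htrunc, ← sum_range_diag_flip, sum_congr rfl hdiag]
  rcases n.eq_zero_or_pos with rfl | hn
  · simpa using (hG 0 le_rfl).symm
  · simp [ite_smul, hn]

end Coefficients

section Telescoping

variable {K A : Type*} [Field K] [CharZero K] [AddCommGroup A] [Module K A]
  (D : A →ₗ[K] A) (μ : A →ₗ[K] A →ₗ[K] A)

lemma map_sum_range_succ_neg_one_pow_smul (hμ : ∀ x y, D (μ x y) = μ (D x) y + μ x (D y))
    {v : ℕ → A} (hv0 : D (v 0) = 0) (hv : ∀ n, D (v (n + 1)) = ((n + 1 : ℕ) : K) • v n)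
    (a : A) (N : ℕ) :
    D (∑ i ∈ range (N + 1), ((-1 : K) ^ i * (i.factorial : K)⁻¹) • μ ((D ^ i) a) (v i))
      = ((-1 : K) ^ N * (N.factorial : K)⁻¹) • μ ((D ^ (N + 1)) a) (v N) := by
  have hD : ∀ k, D ((D ^ k) a) = (D ^ (k + 1)) a := fun k => by
    rw [pow_succ', Module.End.mul_apply]
  induction N with
  | zero => simp [hμ, hv0]
  | succ N ih =>
    rw [sum_range_succ, map_add, ih, map_smul, hμ, hD, hv, map_smul, smul_add, smul_smul,
      neg_one_pow_succ_mul_inv_factorial_succ_mul, neg_smul]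
    abel

lemma map_sum_neg_one_pow_smul_eq_zero (hμ : ∀ x y, D (μ x y) = μ (D x) y + μ x (D y))
    {v : ℕ → A} (hv0 : D (v 0) = 0) (hv : ∀ n, D (v (n + 1)) = ((n + 1 : ℕ) : K) • v n)
    {a : A} {N : ℕ} (ha : (D ^ N) a = 0) :
    D (∑ i ∈ range N, ((-1 : K) ^ i * (i.factorial : K)⁻¹) • μ ((D ^ i) a) (v i)) = 0 := by
  cases N with
  | zero => simp
  | succ N => simp [map_sum_range_succ_neg_one_pow_smul D μ hμ hv0 hv, ha]

end Telescoping

section Powers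

variable {A : Type*} [NonUnitalRing A] {e s : A} {spow : ℕ → A}

lemma mul_spow_of_mul_eq (hidem : e * e = e) (hes : e * s = s) (hspow0 : spow 0 = e)
    (hspowS : ∀ n, spow (n + 1) = s * spow n) (n : ℕ) : e * spow n = spow n := by
  cases n with
  | zero => rw [hspow0, hidem]
  | succ n => rw [hspowS, ← mul_assoc, hes]

lemma spow_add (hidem : e * e = e) (hes : e * s = s) (hspow0 : spow 0 = e)
    (hspowS : ∀ n, spow (n + 1) = s * spow n) (i j : ℕ) :
    spow (i + j) = spow i * spow j := by
  induction i with
  | zero => rw [Nat.zero_add, hspow0, mul_spow_of_mul_eq hidem hes hspow0 hspowS]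
  | succ i ih => rw [Nat.add_right_comm, hspowS, ih, hspowS, mul_assoc]

lemma map_spow_succ (D : A → A) (hder : ∀ a b : A, D (a * b) = D a * b + a * D b)
    (hidem : e * e = e) (hes : e * s = s) (hDe : D e = 0) (hDs : D s = e)
    (hspow0 : spow 0 = e) (hspowS : ∀ n, spow (n + 1) = s * spow n) (n : ℕ) :
    D (spow (n + 1)) = (n + 1) • spow n := by
  induction n with
  | zero => simp [hspowS, hspow0, hder, hDs, hDe, hidem]
  | succ n ih =>
    rw [hspowS, hder, hDs, ih, mul_spow_of_mul_eq hidem hes hspow0 hspowS, mul_smul_comm,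
      ← hspowS, succ_nsmul' _ (n + 1)]

end Powers

lemma Module.End.pow_apply_pow_apply_eq_zero {R M : Type*} [Semiring R] [AddCommMonoid M]
    [Module R M] {f : Module.End R M} {m : M} {n : ℕ} (hn : (f ^ n) m = 0) (j : ℕ) :
    (f ^ n) ((f ^ j) m) = 0 := by
  rw [← Module.End.mul_apply, ← pow_add, Module.End.pow_map_zero_of_le (Nat.le_add_right n j) hn]

section Expansion

variable {K A : Type*} [Field K] [CharZero K] [NonUnitalRing A] [Module K A]
  {D : A →ₗ[K] A} {spow : ℕ → A} {a : A} {n : ℕ}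

lemma mul_spow_zero_eq_sum_inv_factorial_smul [IsScalarTower K A A]
    (hadd : ∀ i j, spow (i + j) = spow i * spow j) (Φ : A → A)
    (hΦ : ∀ (b : A), (D ^ n) b = 0 →
      Φ b = ∑ i ∈ range n, ((-1 : K) ^ i * (i.factorial : K)⁻¹) • ((D ^ i) b * spow i))
    (hn : (D ^ n) a = 0) :
    a * spow 0 = ∑ j ∈ range n, (j.factorial : K)⁻¹ • (Φ ((D ^ j) a) * spow j) := by
  calc a * spow 0 = (D ^ 0) a * spow 0 := rfl
    _ = ∑ j ∈ range n, (j.factorial : K)⁻¹ • ∑ i ∈ range n,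
          ((-1 : K) ^ i * (i.factorial : K)⁻¹) • ((D ^ (i + j)) a * spow (i + j)) :=
      (sum_inv_factorial_smul_sum_neg_one_pow_smul (G := fun k => (D ^ k) a * spow k)
        fun k hk => by rw [Module.End.pow_map_zero_of_le hk hn, zero_mul]).symm
    _ = _ := sum_congr rfl fun j _ => by
      rw [hΦ _ (Module.End.pow_apply_pow_apply_eq_zero hn j), sum_mul]
      simp only [smul_mul_assoc, mul_assoc, ← Module.End.mul_apply, ← pow_add, hadd]

lemma spow_zero_mul_eq_sum_inv_factorial_smul [SMulCommClass K A A]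
    (hadd : ∀ i j, spow (i + j) = spow i * spow j) (Ψ : A → A)
    (hΨ : ∀ (b : A), (D ^ n) b = 0 →
      Ψ b = ∑ i ∈ range n, ((-1 : K) ^ i * (i.factorial : K)⁻¹) • (spow i * (D ^ i) b))
    (hn : (D ^ n) a = 0) :
    spow 0 * a = ∑ j ∈ range n, (j.factorial : K)⁻¹ • (spow j * Ψ ((D ^ j) a)) := by
  calc spow 0 * a = spow 0 * (D ^ 0) a := rfl
    _ = ∑ j ∈ range n, (j.factorial : K)⁻¹ • ∑ i ∈ range n,
          ((-1 : K) ^ i * (i.factorial : K)⁻¹) • (spow (i + j) * (D ^ (i + j)) a) :=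
      (sum_inv_factorial_smul_sum_neg_one_pow_smul (G := fun k => spow k * (D ^ k) a)
        fun k hk => by rw [Module.End.pow_map_zero_of_le hk hn, mul_zero]).symm
    _ = _ := sum_congr rfl fun j _ => by
      rw [hΨ _ (Module.End.pow_apply_pow_apply_eq_zero hn j), mul_sum]
      simp only [mul_smul_comm, ← mul_assoc, ← Module.End.mul_apply, ← pow_add, ← hadd,
        Nat.add_comm j]

end Expansion

/-- Let `K` be a field of characteristic zero, `A` a `K`-algebra, and
`D` a locally nilpotent `K`-derivation of `A`.  Let `e` be an idempotent with `D e = 0`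
and let `s ∈ eAe` satisfy `D s = e`, with the convention `s⁰ = e` (encoded by the
function `spow`).  Define `φ_{−s}(a) = Σ_{i≥0} ((−1)^i/i!) D^i(a) s^i` and
`ψ_{−s}(a) = Σ_{i≥0} ((−1)^i/i!) s^i D^i(a)` (given here as maps `Φ`, `Ψ` characterized
pointwise by the finite sums).  Then for every `a ∈ A`:
(i) `D(Φ a) = 0` and `D(Ψ a) = 0`;
(ii) `a e = Σ_{j≥0} (1/j!) Φ(D^j a) s^j`;
(iii) `e a = Σ_{j≥0} (1/j!) s^j Ψ(D^j a)`. -/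
theorem phi_psi_lemma_for_locally_nilpotent_derivation
    {K : Type*} [Field K] [CharZero K]
    {A : Type*} [NonUnitalRing A] [Module K A] [SMulCommClass K A A] [IsScalarTower K A A]
    (D : A →ₗ[K] A)
    (hder : ∀ a b : A, D (a * b) = D a * b + a * D b)
    (hLN : ∀ a : A, ∃ m : ℕ, 1 ≤ m ∧ (D ^ m) a = 0)
    (e s : A) (hidem : e * e = e) (hDe : D e = 0)
    (hs : ∃ t : A, s = e * t * e) (hDs : D s = e)
    (spow : ℕ → A) (hspow0 : spow 0 = e) (hspowS : ∀ n : ℕ, spow (n + 1) = s * spow n)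
    (Φ Ψ : A → A)
    (hΦ : ∀ (a : A) (n : ℕ), (D ^ n) a = 0 →
      Φ a = ∑ i ∈ Finset.range n, ((-1 : K) ^ i * (i.factorial : K)⁻¹) • ((D ^ i) a * spow i))
    (hΨ : ∀ (a : A) (n : ℕ), (D ^ n) a = 0 →
      Ψ a = ∑ i ∈ Finset.range n, ((-1 : K) ^ i * (i.factorial : K)⁻¹) • (spow i * (D ^ i) a)) :
    ∀ a : A,
      D (Φ a) = 0 ∧ D (Ψ a) = 0 ∧
      (∀ n : ℕ, (D ^ n) a = 0 →
        a * e = ∑ j ∈ Finset.range n, (j.factorial : K)⁻¹ • (Φ ((D ^ j) a) * spow j)) ∧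
      (∀ n : ℕ, (D ^ n) a = 0 →
        e * a = ∑ j ∈ Finset.range n, (j.factorial : K)⁻¹ • (spow j * Ψ ((D ^ j) a))) := by
  have hes : e * s = s := by
    obtain ⟨t, rfl⟩ := hs
    rw [← mul_assoc, ← mul_assoc, hidem]
  have hD0 : D (spow 0) = 0 := hspow0 ▸ hDe
  have hDS (n : ℕ) : D (spow (n + 1)) = ((n + 1 : ℕ) : K) • spow n := by
    rw [Nat.cast_smul_eq_nsmul]
    exact map_spow_succ D hder hidem hes hDe hDs hspow0 hspowS n
  have hadd := spow_add hidem hes hspow0 hspowS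
  intro a
  obtain ⟨m, -, hm⟩ := hLN a
  refine ⟨?_, ?_, fun n hn => ?_, fun n hn => ?_⟩
  · rw [hΦ a m hm]
    exact map_sum_neg_one_pow_smul_eq_zero D (LinearMap.mul K A) hder hD0 hDS hm
  · rw [hΨ a m hm]
    exact map_sum_neg_one_pow_smul_eq_zero D (LinearMap.mul K A).flip
      (fun x y => (hder y x).trans (add_comm _ _)) hD0 hDS hm
  · rw [← hspow0]
    exact mul_spow_zero_eq_sum_inv_factorial_smul hadd Φ (fun b => hΦ b n) hn
  · rw [← hspow0]
    exact spow_zero_mul_eq_sum_inv_factorial_smul hadd Ψ (fun b => hΨ b n) hn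
end

section
/- Let K be a field of characteristic zero and A a K-algebra that is algebraic over K (every element of A satisfies a nonzero polynomial over K). If δ is a locally nilpotent K-derivation or a locally nilpotent K-E-derivation of A, then the only idempotent of A lying in both the kernel of δ and the image of δ is 0. -/
/-!
Replace `e = δ x` by `b = e x e`, which lives in the corner `eAe` (with unit `e`) and still
satisfies `δ b = e`. For a derivation, `δ (e p(b)) = e p'(b)`; for `δ = id - φ`, `φ` shifts
`-b` by `e`, so `φ - id` acts on `e p(-b)` as the forward difference `p(X + 1) - p(X)`.
Both operators lower the degree of a polynomial by one and multiply its leading coefficient by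
the degree, so `d` of them turn any `p` of degree `d` into the constant `d! · lc p`, nonzero in
characteristic zero. Taking for `p` a nonzero polynomial annihilating the algebraic element
`±b` (computed in the unitization of `A`) gives `d! · lc p · e = 0`, hence `e = 0`.
-/

open Polynomial

namespace Polynomial

variable {R : Type*} [CommRing R]

theorem iterate_derivative_natDegree (p : R[X]) :
    derivative^[p.natDegree] p = C (p.natDegree.factorial * p.leadingCoeff) := by
  rw [eq_C_of_natDegree_eq_zero (p := derivative^[p.natDegree] p)
      (by simpa using natDegree_iterate_derivative p p.natDegree),
    coeff_iterate_derivative, zero_add, Nat.descFactorial_self, nsmul_eq_mul, leadingCoeff]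

theorem eval_iterate_taylor_one_sub (p : R[X]) (n : ℕ) (x : R) :
    ((fun q => taylor 1 q - q)^[n] p).eval x = (fwdDiff 1)^[n] (fun y => p.eval y) x := by
  induction n generalizing p with
  | zero => rfl
  | succ n ih =>
    have h : (fun y => (taylor 1 p - p).eval y) = fwdDiff 1 (fun y => p.eval y) := by
      funext y
      simp [fwdDiff, taylor_eval]
    rw [Function.iterate_succ_apply, ih, Function.iterate_succ_apply, h]

theorem iterate_taylor_one_sub_natDegree [IsDomain R] [Infinite R] (p : R[X]) :
    (fun q => taylor 1 q - q)^[p.natDegree] p = C (p.natDegree.factorial * p.leadingCoeff) :=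
  Polynomial.funext fun x => by
    rw [eval_iterate_taylor_one_sub, fwdDiff_iter_degree_eq_factorial]
    simp [mul_comm]

end Polynomial

theorem mul_pow_eq_mul_pow_of_commute {M : Type*} [Monoid M] {E x y : M} (hy : Commute E y)
    (h : E * x = E * y) (n : ℕ) : E * x ^ n = E * y ^ n := by
  induction n with
  | zero => simp
  | succ n ih =>
    calc E * x ^ (n + 1) = E * y ^ n * x := by rw [pow_succ, ← mul_assoc, ih]
      _ = y ^ n * (E * y) := by rw [(hy.pow_right n).eq, mul_assoc, h]
      _ = E * y ^ (n + 1) := by rw [← mul_assoc, ← (hy.pow_right n).eq, mul_assoc, pow_succ]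

section CornerEvaluation

variable {K R : Type*} [CommRing K] [Ring R] [Algebra K R]

theorem Commute.aeval_right {E B : R} (h : Commute E B) (p : K[X]) : Commute E (aeval B p) := by
  rw [aeval_eq_sum_range]
  exact Commute.sum_right _ _ _ fun i _ => (h.pow_right i).smul_right _

theorem mul_aeval_eq_mul_aeval_of_commute {E x y : R} (hy : Commute E y) (h : E * x = E * y)
    (p : K[X]) : E * aeval x p = E * aeval y p := by
  simp only [aeval_eq_sum_range, Finset.mul_sum, mul_smul_comm,
    mul_pow_eq_mul_pow_of_commute hy h]

theorem map_aeval_of_leibniz (D : R →ₗ[K] R) (hD : ∀ a b, D (a * b) = D a * b + a * D b)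
    {E B : R} (hDB : D B = E) (hEB : Commute E B) (p : K[X]) :
    D (aeval B p) = E * aeval B (derivative p) := by
  induction p using Polynomial.induction_on with
  | C a =>
    have hD1 : D 1 = 0 := by simpa using hD 1 1
    simp [Algebra.algebraMap_eq_smul_one, hD1]
  | add p q hp hq => simp only [map_add, hp, hq, mul_add]
  | monomial n a ih =>
    rw [pow_succ, ← mul_assoc]
    generalize C a * X ^ n = q at ih ⊢
    rw [map_mul, aeval_X, hD, ih, hDB, derivative_mul, derivative_X,
      mul_one, map_add, map_mul, aeval_X, mul_add, mul_assoc, (hEB.aeval_right _).eq]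

theorem map_mul_aeval_of_leibniz (D : R →ₗ[K] R) (hD : ∀ a b, D (a * b) = D a * b + a * D b)
    {E B : R} (hE : IsIdempotentElem E) (hDE : D E = 0) (hDB : D B = E) (hEB : Commute E B)
    (p : K[X]) : D (E * aeval B p) = E * aeval B (derivative p) := by
  rw [hD, hDE, zero_mul, zero_add, map_aeval_of_leibniz D hD hDB hEB, ← mul_assoc, hE.eq]

theorem map_mul_aeval_sub_of_algHom (Φ : R →ₐ[K] R) {E B : R} (hE : IsIdempotentElem E)
    (hΦE : Φ E = E) (hΦB : Φ B = B + E) (hEB : Commute E B) (p : K[X]) :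
    (Φ.toLinearMap - LinearMap.id : R →ₗ[K] R) (E * aeval B p) =
      E * aeval B (taylor 1 p - p) := by
  have hshift : E * aeval (B + E) p = E * aeval (B + 1) p :=
    mul_aeval_eq_mul_aeval_of_commute (hEB.add_right (Commute.one_right E))
      (by rw [mul_add, mul_add, hE.eq, mul_one]) p
  rw [LinearMap.sub_apply, AlgHom.toLinearMap_apply, map_mul, hΦE, ← aeval_algHom_apply, hΦB,
    hshift, LinearMap.id_apply, map_sub, mul_sub, taylor_apply, aeval_comp]
  simp

end CornerEvaluation

theorem eq_zero_of_mul_aeval_intertwines {K R : Type*} [Field K] [CharZero K] [Ring R]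
    [Algebra K R] {E B : R} (hB : IsAlgebraic K B) (D : R →ₗ[K] R) (Δ : K[X] → K[X])
    (hΔ : ∀ p : K[X], Δ^[p.natDegree] p = C (p.natDegree.factorial * p.leadingCoeff))
    (hD : ∀ p, D (E * aeval B p) = E * aeval B (Δ p)) : E = 0 := by
  obtain ⟨p, hp0, hpB⟩ := hB
  have hiter : ∀ n q, D^[n] (E * aeval B q) = E * aeval B (Δ^[n] q) := by
    intro n
    induction n with
    | zero => simp
    | succ n ih => intro q; rw [Function.iterate_succ_apply, hD, ih, Function.iterate_succ_apply]
  have hc : (p.natDegree.factorial * p.leadingCoeff : K) ≠ 0 :=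
    mul_ne_zero (Nat.cast_ne_zero.2 p.natDegree.factorial_ne_zero) (leadingCoeff_ne_zero.2 hp0)
  have h := hiter p.natDegree p
  rw [hpB, mul_zero, iterate_map_zero, hΔ, aeval_C, Algebra.algebraMap_eq_smul_one, mul_smul_comm,
    mul_one, eq_comm, smul_eq_zero] at h
  exact h.resolve_left hc

namespace Unitization

theorem isAlgebraic_inr_of_finiteDimensional_span_pow {K A : Type*} [Field K] [NonUnitalRing A]
    [Module K A] [SMulCommClass K A A] [IsScalarTower K A A] (b : A)
    (hb : FiniteDimensional K (Submodule.span K (Set.range fun n : ℕ => (· * b)^[n] b))) :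
    IsAlgebraic K (b : Unitization K A) := by
  have hpow : ∀ n : ℕ,
      (((· * b)^[n] b : A) : Unitization K A) = (b : Unitization K A) ^ (n + 1) := by
    intro n
    induction n with
    | zero => simp
    | succ n ih => rw [Function.iterate_succ_apply', inr_mul, ih, ← pow_succ]
  set T := Submodule.span K {1} ⊔
    (Submodule.span K (Set.range fun n : ℕ => (· * b)^[n] b)).map (inrHom K K A)
  have hT : T.FG := (Submodule.fg_span_singleton 1).sup ((Module.Finite.iff_fg.mp hb).map _)
  refine (IsIntegral.of_mem_of_fg _ (hT.of_le ?_) _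
    (Algebra.self_mem_adjoin_singleton K (b : Unitization K A))).isAlgebraic
  rw [Algebra.adjoin_eq_span, Submodule.span_le]
  intro x hx
  obtain ⟨n, rfl⟩ := Submonoid.mem_closure_singleton.mp hx
  cases n with
  | zero => exact Submodule.mem_sup_left (by simp)
  | succ n => exact Submodule.mem_sup_right ⟨_, Submodule.subset_span ⟨n, rfl⟩, hpow n⟩

section ExtendByZero

variable {K A : Type*} [CommRing K] [NonUnitalRing A] [Module K A] (δ : A →ₗ[K] A)

def extendByZero : Unitization K A →ₗ[K] Unitization K A :=
  inrHom K K A ∘ₗ δ ∘ₗ sndHom K K A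

@[simp]
theorem extendByZero_inr (a : A) :
    extendByZero δ (a : Unitization K A) = (δ a : Unitization K A) := by
  simp [extendByZero]

theorem extendByZero_mul (hδ : ∀ a b : A, δ (a * b) = δ a * b + a * δ b)
    (u v : Unitization K A) :
    extendByZero δ (u * v) = extendByZero δ u * v + u * extendByZero δ v := by
  ext
  · simp [extendByZero]
  · simp [extendByZero, hδ]
    abel

end ExtendByZero

theorem commute_inr_mul_mul {K A : Type*} [CommRing K] [NonUnitalRing A] [Module K A] {e : A}
    (he : e * e = e) (x : A) :
    Commute (e : Unitization K A) ((e * x * e : A) : Unitization K A) := by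
  rw [Commute, SemiconjBy, ← inr_mul, ← inr_mul, ← mul_assoc, ← mul_assoc, he, mul_assoc _ e e,
    he]

end Unitization

section Corner

variable {K A : Type*} [CommRing K] [NonUnitalRing A] [Module K A]

theorem map_mul_mul_eq_of_leibniz (δ : A →ₗ[K] A)
    (hδ : ∀ a b : A, δ (a * b) = δ a * b + a * δ b) {e x : A} (he : e * e = e) (hδe : δ e = 0)
    (hδx : δ x = e) : δ (e * x * e) = e := by
  rw [hδ, hδ, hδe, hδx, zero_mul, zero_add, mul_zero, add_zero, he, he]

theorem NonUnitalAlgHom.map_mul_mul_eq_sub (φ : A →ₙₐ[K] A) {e x : A} (he : e * e = e)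
    (hφe : φ e = e) (hφx : φ x = x - e) : φ (e * x * e) = e * x * e - e := by
  rw [map_mul, map_mul, hφe, hφx, mul_sub, sub_mul, he, he]

end Corner

theorem no_nonzero_idempotent_in_kernel_cap_image_of_algebraic_general
    {K : Type*} [Field K] [CharZero K]
    {A : Type*} [NonUnitalRing A] [Module K A] [SMulCommClass K A A] [IsScalarTower K A A]
    (halg : ∀ a : A,
      FiniteDimensional K (Submodule.span K (Set.range fun n : ℕ => (fun x : A => x * a)^[n] a)))
    (δ : A →ₗ[K] A)
    (hδ : (∀ a b : A, δ (a * b) = δ a * b + a * δ b) ∨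
      (∃ φ : A →ₙₐ[K] A, ∀ a : A, δ a = a - φ a))
    (e : A) (hidem : e * e = e) (hker : δ e = 0) (him : e ∈ LinearMap.range δ) :
    e = 0 := by
  obtain ⟨x, hx⟩ := him
  set b := e * x * e
  set E : Unitization K A := (e : Unitization K A)
  have hE : IsIdempotentElem E :=
    IsIdempotentElem.map hidem (Unitization.inrNonUnitalAlgHom K A)
  have hEB : Commute E (b : Unitization K A) := Unitization.commute_inr_mul_mul hidem x
  suffices E = 0 from Unitization.inr_injective (R := K) (by simpa using this)
  rcases hδ with hleib | ⟨φ, hφ⟩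
  · have hδb : δ b = e := map_mul_mul_eq_of_leibniz δ hleib hidem hker hx
    exact eq_zero_of_mul_aeval_intertwines
      (Unitization.isAlgebraic_inr_of_finiteDimensional_span_pow b (halg b))
      (Unitization.extendByZero δ) derivative iterate_derivative_natDegree
      (map_mul_aeval_of_leibniz _ (Unitization.extendByZero_mul δ hleib) hE
        (by simp [E, hker]) (by simp [E, hδb]) hEB)
  · have hφe : φ e = e := by rw [eq_comm, ← sub_eq_zero, ← hφ, hker]
    have hφb : φ b = b - e :=
      φ.map_mul_mul_eq_sub hidem hφe (by rw [← hx, hφ, sub_sub_cancel])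
    let Φ := Unitization.lift ((Unitization.inrNonUnitalAlgHom K A).comp φ)
    have hΦE : Φ E = E := by simp [Φ, E, hφe]
    have hΦb : Φ (-b : A) = (-b : A) + E := by
      simp [Φ, E, hφb, neg_add_eq_sub]
    exact eq_zero_of_mul_aeval_intertwines
      (Unitization.isAlgebraic_inr_of_finiteDimensional_span_pow (-b) (halg (-b)))
      (Φ.toLinearMap - LinearMap.id) _ iterate_taylor_one_sub_natDegree
      (map_mul_aeval_sub_of_algHom Φ hE hΦE hΦb (by simpa using hEB.neg_right))

/-- Let `K` be a field of characteristic zero and `A` a `K`-algebra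
that is algebraic over `K` (each `a ∈ A` spans, together with its powers
`a, a², a³, …`, a finite-dimensional `K`-subspace; powers are encoded via iterated
right multiplication since `A` need not be unital).  If `δ` is a locally nilpotent
`K`-derivation or a locally nilpotent `K`-`E`-derivation of `A`, then the only
idempotent of `A` lying in both the kernel and the image of `δ` is `0`. -/
theorem no_nonzero_idempotent_in_kernel_cap_image_of_algebraic
    {K : Type*} [Field K] [CharZero K]
    {A : Type*} [NonUnitalRing A] [Module K A] [SMulCommClass K A A] [IsScalarTower K A A]
    (halg : ∀ a : A,
      FiniteDimensional K (Submodule.span K (Set.range fun n : ℕ => (fun x : A => x * a)^[n] a)))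
    (δ : A →ₗ[K] A)
    (hδ : (∀ a b : A, δ (a * b) = δ a * b + a * δ b) ∨
      (∃ φ : A →ₙₐ[K] A, ∀ a : A, δ a = a - φ a))
    (hLN : ∀ a : A, ∃ m : ℕ, 1 ≤ m ∧ (δ ^ m) a = 0)
    (e : A) (hidem : e * e = e) (hker : δ e = 0) (him : e ∈ LinearMap.range δ) :
    e = 0 :=
  no_nonzero_idempotent_in_kernel_cap_image_of_algebraic_general halg δ hδ e hidem hker him
end

section
/- Let K be an algebraically closed field of characteristic zero, A a K-algebra, and D a K-derivation of A that decomposes as D = D_s + D_n, where D_s and D_n are commuting K-derivations of A, D_n is locally nilpotent, and A decomposes as the direct sum A = ⊕_{λ∈Λ} A_λ of the eigenspaces A_λ = {a ∈ A : D_s(a) = λa} of D_s (Λ being the set of eigenvalues of D_s). Then: (1) the kernel of D is contained in A_0; and (2) the image of D equals D_n(A_0) ⊕ (⊕_{0≠λ∈Λ} A_λ); in particular, A_λ ⊆ D(A) for every nonzero eigenvalue λ. -/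
/-!
On the eigenspace `A_μ` of `Ds` the operator `D = Ds + Dn` acts as `μ + Dn` with `Dn`
locally nilpotent, so for `μ ≠ 0` it maps `A_μ` onto itself (invert `μ + Dn` by a
terminating geometric series), while on `A_0` it is `Dn`. If `D a = 0` then `Ds a = -Dn a`,
so `Ds` is nilpotent on `a`: `a` lies in the generalized `0`-eigenspace of `Ds`, which is
`A_0` because the eigenspaces of `Ds` span `A` and generalized eigenspaces are independent.
-/

namespace Module.End

variable {K M : Type*} [Field K] [AddCommGroup M] [Module K M] {s n : End K M}

lemma maxGenEigenspace_eq_eigenspace_of_iSup_eigenspace_eq_top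
    (hs : ⨆ μ, s.eigenspace μ = ⊤) (μ : K) : s.maxGenEigenspace μ = s.eigenspace μ := by
  refine le_antisymm (le_of_eq ?_) eigenspace_le_maxGenEigenspace
  have hdisj : s.maxGenEigenspace μ ⊓ ⨆ (ν) (_ : ν ≠ μ), s.eigenspace ν = ⊥ :=
    disjoint_iff.mp <| (s.independent_maxGenEigenspace μ).mono_right <|
      iSup₂_mono fun _ _ ↦ eigenspace_le_maxGenEigenspace
  calc s.maxGenEigenspace μ
      = (s.eigenspace μ ⊔ ⨆ (ν) (_ : ν ≠ μ), s.eigenspace ν) ⊓ s.maxGenEigenspace μ := by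
        rw [← iSup_split_single, hs, top_inf_eq]
    _ = s.eigenspace μ := by
        rw [sup_inf_assoc_of_le _ eigenspace_le_maxGenEigenspace, inf_comm, hdisj, sup_bot_eq]

lemma ker_add_le_maxGenEigenspace_zero (hc : Commute s n) (hn : ∀ a, ∃ m : ℕ, (n ^ m) a = 0) :
    LinearMap.ker (s + n) ≤ s.maxGenEigenspace 0 := by
  -- `s` and `-n` agree on the kernel of `s + n`, which `n` preserves.
  have hpow : ∀ m : ℕ, ∀ a ∈ LinearMap.ker (s + n), (s ^ m) a = ((-n) ^ m) a := by
    intro m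
    induction m with
    | zero => simp
    | succ m ih =>
      intro a ha
      have hsa : s a = -n a := eq_neg_of_add_eq_zero_left ha
      have hna : n a ∈ LinearMap.ker (s + n) := by
        rw [LinearMap.mem_ker, ← mul_apply, (hc.add_left (Commute.refl n)).eq, mul_apply, ha,
          map_zero]
      rw [pow_succ, mul_apply, hsa, ← LinearMap.neg_apply, ih ((-n) a) (neg_mem hna), ← mul_apply,
        ← pow_succ]
  intro a ha
  obtain ⟨m, hm⟩ := hn a
  rw [mem_maxGenEigenspace]
  refine ⟨m, ?_⟩
  rw [zero_smul, sub_zero, hpow m a ha, neg_pow, mul_apply, hm, map_zero]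

lemma eigenspace_le_range_add (hc : Commute s n) (hn : ∀ a, ∃ m : ℕ, (n ^ m) a = 0)
    {μ : K} (hμ : μ ≠ 0) : s.eigenspace μ ≤ LinearMap.range (s + n) := by
  suffices h : ∀ m : ℕ, ∀ b ∈ s.eigenspace μ, (n ^ m) b = 0 → b ∈ LinearMap.range (s + n) from
    fun b hb ↦ (hn b).elim fun m hm ↦ h m b hb hm
  intro m
  induction m with
  | zero =>
    intro b _ hb
    rw [pow_zero, one_apply] at hb
    exact hb ▸ zero_mem _
  | succ m ih =>
    intro b hb hnb
    -- `b = (s + n) (μ⁻¹ • b) - μ⁻¹ • n b`, and `n b` is killed by a smaller power of `n`.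
    have hsb : (s + n) (μ⁻¹ • b) = b + μ⁻¹ • n b := by
      rw [map_smul, LinearMap.add_apply, mem_eigenspace_iff.mp hb, smul_add, smul_smul,
        inv_mul_cancel₀ hμ, one_smul]
    have hnb' : μ⁻¹ • n b ∈ LinearMap.range (s + n) := by
      refine ih _ (Submodule.smul_mem _ _ (mapsTo_genEigenspace_of_comm hc μ 1 hb)) ?_
      rw [map_smul, ← mul_apply, ← pow_succ, hnb, smul_zero]
    rw [← add_sub_cancel_right b (μ⁻¹ • n b), ← hsb]
    exact sub_mem (LinearMap.mem_range_self _ _) hnb'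

lemma map_eigenspace_zero_le_range_add :
    (s.eigenspace 0).map n ≤ LinearMap.range (s + n) := by
  rintro _ ⟨a, ha, rfl⟩
  refine ⟨a, ?_⟩
  rw [LinearMap.add_apply, mem_eigenspace_iff.mp ha, zero_smul, zero_add]

lemma range_add_le (hc : Commute s n) (hs : ⨆ μ, s.eigenspace μ = ⊤) :
    LinearMap.range (s + n) ≤
      (s.eigenspace 0).map n ⊔ ⨆ (μ) (_ : μ ≠ 0), s.eigenspace μ := by
  rw [LinearMap.range_eq_map, ← hs, Submodule.map_iSup]
  refine iSup_le fun μ ↦ ?_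
  rintro _ ⟨a, ha, rfl⟩
  have hsa : (s + n) a = μ • a + n a := by
    rw [LinearMap.add_apply, mem_eigenspace_iff.mp ha]
  rcases eq_or_ne μ 0 with rfl | hμ
  · rw [hsa, zero_smul, zero_add]
    exact Submodule.mem_sup_left (Submodule.mem_map_of_mem ha)
  · refine Submodule.mem_sup_right (Submodule.mem_iSup_of_mem μ (Submodule.mem_iSup_of_mem hμ ?_))
    rw [hsa]
    exact add_mem (Submodule.smul_mem _ _ ha) (mapsTo_genEigenspace_of_comm hc μ 1 ha)

end Module.End

open Module.End in
theorem kernel_and_image_of_semisimple_plus_nilpotent_derivation_general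
    {K : Type*} [Field K]
    {A : Type*} [NonUnitalRing A] [Module K A]
    (D Ds Dn : A →ₗ[K] A)
    (hcomm : Ds * Dn = Dn * Ds)
    (hLN : ∀ a : A, ∃ m : ℕ, 1 ≤ m ∧ (Dn ^ m) a = 0)
    (hsum : D = Ds + Dn)
    (hdecomp : (⨆ μ : K, Module.End.eigenspace Ds μ) = ⊤) :
    LinearMap.ker D ≤ Module.End.eigenspace Ds 0 ∧
    LinearMap.range D = Submodule.map Dn (Module.End.eigenspace Ds 0) ⊔
      (⨆ μ : K, ⨆ _ : μ ≠ 0, Module.End.eigenspace Ds μ) ∧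
    ∀ μ : K, μ ≠ 0 → Module.End.eigenspace Ds μ ≤ LinearMap.range D := by
  subst hsum
  have hn : ∀ a, ∃ m : ℕ, (Dn ^ m) a = 0 := fun a ↦ (hLN a).imp fun _ ↦ And.right
  have hrange : ∀ μ : K, μ ≠ 0 → eigenspace Ds μ ≤ LinearMap.range (Ds + Dn) :=
    fun _ ↦ eigenspace_le_range_add hcomm hn
  refine ⟨?_, le_antisymm (range_add_le hcomm hdecomp) ?_, hrange⟩
  · rw [← maxGenEigenspace_eq_eigenspace_of_iSup_eigenspace_eq_top hdecomp]
    exact ker_add_le_maxGenEigenspace_zero hcomm hn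
  · exact sup_le map_eigenspace_zero_le_range_add (iSup₂_le hrange)

/-- Let `K` be an algebraically closed field of characteristic zero,
`A` a `K`-algebra, and `D` a `K`-derivation of `A` decomposing as `D = D_s + D_n`, where
`D_s, D_n` are commuting `K`-derivations of `A`, `D_n` is locally nilpotent, and `A` is
the direct sum of the eigenspaces of `D_s` (expressed as: the eigenspaces of `D_s` span
`A`; eigenspaces for distinct eigenvalues are automatically independent).  Then:
(1) `ker D ⊆ A_0`; and
(2) `im D = D_n(A_0) ⊕ (⊕_{λ≠0} A_λ)`; in particular `A_λ ⊆ im D` for every `λ ≠ 0`. -/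
theorem kernel_and_image_of_semisimple_plus_nilpotent_derivation
    {K : Type*} [Field K] [CharZero K] [IsAlgClosed K]
    {A : Type*} [NonUnitalRing A] [Module K A] [SMulCommClass K A A] [IsScalarTower K A A]
    (D Ds Dn : A →ₗ[K] A)
    (hD : ∀ a b : A, D (a * b) = D a * b + a * D b)
    (hDsder : ∀ a b : A, Ds (a * b) = Ds a * b + a * Ds b)
    (hDnder : ∀ a b : A, Dn (a * b) = Dn a * b + a * Dn b)
    (hcomm : Ds * Dn = Dn * Ds)
    (hLN : ∀ a : A, ∃ m : ℕ, 1 ≤ m ∧ (Dn ^ m) a = 0)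
    (hsum : D = Ds + Dn)
    (hdecomp : (⨆ μ : K, Module.End.eigenspace Ds μ) = ⊤) :
    LinearMap.ker D ≤ Module.End.eigenspace Ds 0 ∧
    LinearMap.range D = Submodule.map Dn (Module.End.eigenspace Ds 0) ⊔
      (⨆ μ : K, ⨆ _ : μ ≠ 0, Module.End.eigenspace Ds μ) ∧
    ∀ μ : K, μ ≠ 0 → Module.End.eigenspace Ds μ ≤ LinearMap.range D :=
  kernel_and_image_of_semisimple_plus_nilpotent_derivation_general D Ds Dn hcomm hLN hsum hdecomp
end

section
/- Let K be an algebraically closed field of characteristic zero, A a K-algebra, φ a K-algebra endomorphism of A, and δ := Id_A − φ. Suppose φ decomposes as φ = φ_s + φ_n, where φ_s and φ_n are commuting K-linear endomorphisms of A, φ_n is locally nilpotent, A decomposes as the direct sum A = ⊕_{λ∈Λ} A_λ of the eigenspaces A_λ = {a ∈ A : φ_s(a) = λa} of φ_s (Λ being the set of eigenvalues of φ_s), and each A_λ is invariant under φ. Then: (1) the kernel of δ is contained in A_1; and (2) the image of δ equals φ_n(A_1) ⊕ (⊕_{1≠λ∈Λ} A_λ); in particular, A_λ ⊆ δ(A)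 for every eigenvalue λ ≠ 1. -/
/-- If submodules are independent, a finite sum of members that equals zero has all
components zero. -/
private lemma aux_sum_eq_zero {K A ι : Type*} [Field K] [AddCommGroup A] [Module K A]
    {p : ι → Submodule K A} (hp : iSupIndep p) (s : Finset ι) (g : ι → A)
    (hg : ∀ i ∈ s, g i ∈ p i) (hsum : ∑ i ∈ s, g i = 0) : ∀ i ∈ s, g i = 0 := by
  classical
  induction s using Finset.induction_on with
  | empty => simp
  | @insert j s hj ih =>
    rw [Finset.sum_insert hj] at hsum
    have hmem : -(∑ i ∈ s, g i) ∈ ⨆ (k) (_ : k ≠ j), p k := by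
      refine Submodule.neg_mem _ (Submodule.sum_mem _ fun i hi => ?_)
      have hij : i ≠ j := fun h => hj (h ▸ hi)
      exact Submodule.mem_iSup_of_mem i (Submodule.mem_iSup_of_mem hij (hg i (Finset.mem_insert_of_mem hi)))
    have h1 : g j = -(∑ i ∈ s, g i) := eq_neg_of_add_eq_zero_left hsum
    have hgj : g j = 0 :=
      Submodule.disjoint_def.mp (iSupIndep_def.mp hp j) (g j)
        (hg j (Finset.mem_insert_self j s)) (h1 ▸ hmem)
    have hsum' : ∑ i ∈ s, g i = 0 := by
      have := hsum; rw [hgj, zero_add] at this; exact this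
    intro i hi
    rcases Finset.mem_insert.mp hi with rfl | hi
    · exact hgj
    · exact ih (fun k hk => hg k (Finset.mem_insert_of_mem hk)) hsum' i hi

/-- Let `K` be an algebraically closed field of characteristic zero,
`A` a `K`-algebra, `φ` a `K`-algebra endomorphism of `A`, and `δ := Id − φ`.  Suppose
`φ = φ_s + φ_n` with `φ_s, φ_n` commuting `K`-linear endomorphisms, `φ_n` locally
nilpotent, `A` the direct sum of the eigenspaces of `φ_s` (expressed as: the eigenspaces
of `φ_s` span `A`), and each eigenspace `A_λ` invariant under `φ`.  Then:
(1) `ker δ ⊆ A_1`; and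
(2) `im δ = φ_n(A_1) ⊕ (⊕_{λ≠1} A_λ)`; in particular `A_λ ⊆ im δ` for every `λ ≠ 1`. -/
theorem kernel_and_image_of_semisimple_plus_nilpotent_Ederivation
    {K : Type*} [Field K] [CharZero K] [IsAlgClosed K]
    {A : Type*} [NonUnitalRing A] [Module K A] [SMulCommClass K A A] [IsScalarTower K A A]
    (φ : A →ₙₐ[K] A) (φs φn : A →ₗ[K] A)
    (hcomm : φs * φn = φn * φs)
    (hLN : ∀ a : A, ∃ m : ℕ, 1 ≤ m ∧ (φn ^ m) a = 0)
    (hsum : (φ : A →ₗ[K] A) = φs + φn)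
    (hdecomp : (⨆ μ : K, Module.End.eigenspace φs μ) = ⊤)
    (hinv : ∀ μ : K,
      Submodule.map (φ : A →ₗ[K] A) (Module.End.eigenspace φs μ) ≤ Module.End.eigenspace φs μ) :
    LinearMap.ker (LinearMap.id - (φ : A →ₗ[K] A)) ≤ Module.End.eigenspace φs 1 ∧
    LinearMap.range (LinearMap.id - (φ : A →ₗ[K] A)) =
      Submodule.map φn (Module.End.eigenspace φs 1) ⊔
        (⨆ μ : K, ⨆ _ : μ ≠ 1, Module.End.eigenspace φs μ) ∧
    ∀ μ : K, μ ≠ 1 →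
      Module.End.eigenspace φs μ ≤ LinearMap.range (LinearMap.id - (φ : A →ₗ[K] A)) := by
  classical
  set E : K → Submodule K A := Module.End.eigenspace φs with hE
  set δ : A →ₗ[K] A := LinearMap.id - (φ : A →ₗ[K] A) with hδ
  have hφs : ∀ (μ : K) (a : A), a ∈ E μ → φs a = μ • a := fun μ a ha =>
    Module.End.mem_eigenspace_iff.mp ha
  have hφmem : ∀ (μ : K) (a : A), a ∈ E μ → (φ : A →ₗ[K] A) a ∈ E μ := fun μ a ha =>
    hinv μ ⟨a, ha, rfl⟩
  have hφval : ∀ (μ : K) (a : A), a ∈ E μ → (φ : A →ₗ[K] A) a = μ • a + φn a := by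
    intro μ a ha
    rw [hsum, LinearMap.add_apply, hφs μ a ha]
  have hnmem : ∀ (μ : K) (a : A), a ∈ E μ → φn a ∈ E μ := by
    intro μ a ha
    have h : φn a = (φ : A →ₗ[K] A) a - μ • a := by
      rw [hφval μ a ha]; abel
    rw [h]
    exact Submodule.sub_mem _ (hφmem μ a ha) (Submodule.smul_mem _ _ ha)
  have hδeq : ∀ (μ : K) (a : A), a ∈ E μ → δ a = (1 - μ) • a - φn a := by
    intro μ a ha
    simp only [hδ, LinearMap.sub_apply, LinearMap.id_apply, hφval μ a ha, sub_smul, one_smul]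
    abel
  have hδmem : ∀ (μ : K) (a : A), a ∈ E μ → δ a ∈ E μ := fun μ a ha => by
    rw [hδeq μ a ha]
    exact Submodule.sub_mem _ (Submodule.smul_mem _ _ ha) (hnmem μ a ha)
  have hinj : ∀ (μ : K), μ ≠ 1 → ∀ a ∈ E μ, δ a = 0 → a = 0 := by
    intro μ hμ a ha h0
    have hc : (1 : K) - μ ≠ 0 := sub_ne_zero.mpr (Ne.symm hμ)
    have hna : φn a = (1 - μ) • a := by
      have h := hδeq μ a ha
      rw [h0] at h
      exact (sub_eq_zero.mp h.symm).symm
    have hpow : ∀ k : ℕ, (φn ^ k) a = ((1 - μ) ^ k) • a := by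
      intro k
      induction k with
      | zero => simp
      | succ k ih =>
        rw [pow_succ, Module.End.mul_apply, hna, map_smul, ih, smul_smul, pow_succ]
        ring_nf
    obtain ⟨m, -, hm⟩ := hLN a
    have h2 : ((1 - μ) ^ m) • a = 0 := by rw [← hpow m, hm]
    rcases smul_eq_zero.mp h2 with h | h
    · exact absurd h (pow_ne_zero m hc)
    · exact h
  have hsurj : ∀ (μ : K), μ ≠ 1 → ∀ (m : ℕ) (a : A), a ∈ E μ → (φn ^ m) a = 0 →
      ∃ b ∈ E μ, δ b = a := by
    intro μ hμ
    have hc : (1 : K) - μ ≠ 0 := sub_ne_zero.mpr (Ne.symm hμ)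
    intro m
    induction m with
    | zero =>
      intro a ha h0
      rw [pow_zero, Module.End.one_apply] at h0
      exact ⟨0, Submodule.zero_mem _, by rw [map_zero, h0]⟩
    | succ m ih =>
      intro a ha h0
      have hna : (φn ^ m) (φn a) = 0 := by
        rw [← Module.End.mul_apply, ← pow_succ]; exact h0
      obtain ⟨b', hb', hδb'⟩ := ih (φn a) (hnmem μ a ha) hna
      have hmem2 : (1 - μ)⁻¹ • (a + b') ∈ E μ :=
        Submodule.smul_mem _ _ (Submodule.add_mem _ ha hb')
      refine ⟨(1 - μ)⁻¹ • (a + b'), hmem2, ?_⟩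
      have hb'' : φn b' = (1 - μ) • b' - φn a := by
        have h := hδeq μ b' hb'
        rw [hδb'] at h
        rw [h]; abel
      rw [hδeq μ _ hmem2, map_smul, map_add, hb'', smul_smul, mul_inv_cancel₀ hc, one_smul]
      have h3 : φn a + ((1 - μ) • b' - φn a) = (1 - μ) • b' := by abel
      rw [h3, smul_smul, inv_mul_cancel₀ hc, one_smul]
      abel
  have part3 : ∀ μ : K, μ ≠ 1 → E μ ≤ LinearMap.range δ := by
    intro μ hμ a ha
    obtain ⟨m, -, hm⟩ := hLN a
    obtain ⟨b, -, hb⟩ := hsurj μ hμ m a ha hm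
    exact ⟨b, hb⟩
  have part1 : LinearMap.ker δ ≤ E 1 := by
    intro a ha0
    have h0 : δ a = 0 := ha0
    have hmem : a ∈ ⨆ μ : K, E μ := hdecomp ▸ Submodule.mem_top
    obtain ⟨f, hf, hfs⟩ := (Submodule.mem_iSup_iff_exists_finsupp E a).mp hmem
    have hfs' : ∑ μ ∈ f.support, f μ = a := hfs
    have hzero : ∀ μ ∈ f.support, δ (f μ) = 0 := by
      apply aux_sum_eq_zero (Module.End.eigenspaces_iSupIndep φs) f.support (fun μ => δ (f μ))
        (fun μ _ => hδmem μ (f μ) (hf μ))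
      rw [← map_sum, hfs', h0]
    rw [← hfs']
    refine Submodule.sum_mem _ fun μ hμs => ?_
    by_cases h1 : μ = 1
    · exact h1 ▸ hf μ
    · rw [hinj μ h1 (f μ) (hf μ) (hzero μ hμs)]
      exact Submodule.zero_mem _
  have part2 : LinearMap.range δ = Submodule.map φn (E 1) ⊔ (⨆ μ : K, ⨆ _ : μ ≠ 1, E μ) := by
    have hr : LinearMap.range δ = ⨆ μ : K, Submodule.map δ (E μ) := by
      rw [LinearMap.range_eq_map, ← hdecomp, Submodule.map_iSup]
    rw [hr]
    apply le_antisymm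
    · apply iSup_le
      intro μ
      by_cases h1 : μ = 1
      · subst h1
        refine le_sup_of_le_left ?_
        rintro x ⟨a, ha, rfl⟩
        refine ⟨-a, Submodule.neg_mem _ ha, ?_⟩
        rw [map_neg, hδeq 1 a ha]
        simp
      · refine le_sup_of_le_right ?_
        refine le_trans ?_ (le_iSup₂ (f := fun (μ : K) (_ : μ ≠ 1) => E μ) μ h1)
        rintro x ⟨a, ha, rfl⟩
        exact hδmem μ a ha
    · apply sup_le
      · rintro x ⟨a, ha, rfl⟩
        have hx : δ (-a) = φn a := by
          rw [map_neg, hδeq 1 a ha]; simp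
        exact Submodule.mem_iSup_of_mem 1 ⟨-a, Submodule.neg_mem _ ha, hx⟩
      · refine iSup₂_le fun μ hμ => ?_
        intro a ha
        obtain ⟨m, -, hm⟩ := hLN a
        obtain ⟨b, hb, hδb⟩ := hsurj μ hμ m a ha hm
        exact Submodule.mem_iSup_of_mem μ ⟨b, hb, hδb⟩
  exact ⟨part1, part2, part3⟩
end
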